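/- arXiv:2605.00622 — 4 statements merged into one kernel-verified Lean document; each statement's English description precedes it below -/
import Mathlib

section
/- If a set Γ of k pairwise non-isomorphic finite posets, each of size n, has a witness, then it has a witness of size at most nk. -/
/-!
Formalization framework: finite posets are bundled as `FinPartOrd.{0}`, downsets are
`Finset`s of elements, unlabelled posets are isomorphism classes (`UPoset`), and a witness
of a set `Γ` of unlabelled posets at size `n` is a finite poset whose set of size-`n`
downsets, up to isomorphism, is exactly `Γ`.
-/

attribute [local instance] Classical.propDecidable

noncomputable section

open Finset

/-- `D` is a downset of the finite poset `Q`. -/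
def IsDownset (Q : FinPartOrd.{0}) (D : Finset ↥Q) : Prop :=
  ∀ ⦃a b : ↥Q⦄, a ∈ D → b ≤ a → b ∈ D

/-- The induced subposet of `Q` on a finset `D` of its elements. -/
def subposet (Q : FinPartOrd.{0}) (D : Finset ↥Q) : FinPartOrd.{0} :=
  FinPartOrd.of {x : ↥Q // x ∈ D}

/-- The isomorphism setoid on finite posets. -/
def isoSetoid : Setoid FinPartOrd.{0} where
  r P Q := Nonempty (↥P ≃o ↥Q)
  iseqv := ⟨fun _ => ⟨OrderIso.refl _⟩, fun ⟨e⟩ => ⟨e.symm⟩, fun ⟨e⟩ ⟨f⟩ => ⟨e.trans f⟩⟩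

/-- Unlabelled finite posets: isomorphism classes of finite posets. -/
def UPoset := Quotient isoSetoid

/-- The isomorphism class of a finite poset. -/
def cls (P : FinPartOrd.{0}) : UPoset := Quotient.mk isoSetoid P

/-- The number of elements of a finite poset. -/
def size (Q : FinPartOrd.{0}) : ℕ := Fintype.card ↥Q

/-- The size of an isomorphism class of finite posets. -/
def usize : UPoset → ℕ :=
  Quotient.lift size fun _ _ h => h.elim fun e => Fintype.card_congr e.toEquiv

/-- `D_n(Q)` : the set of downsets of `Q` of size `n`, up to isomorphism. -/
def DSet (n : ℕ) (Q : FinPartOrd.{0}) : Set UPoset :=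
  {c | ∃ D : Finset ↥Q, IsDownset Q D ∧ D.card = n ∧ cls (subposet Q D) = c}

/-- `d_n(Q)` : the number of isomorphism classes of downsets of `Q` of size `n`. -/
def dNum (n : ℕ) (Q : FinPartOrd.{0}) : ℕ := (DSet n Q).ncard

/-- `D(Q)` : the set of nonempty downsets of `Q`, up to isomorphism. -/
def DAllSet (Q : FinPartOrd.{0}) : Set UPoset :=
  {c | ∃ D : Finset ↥Q, IsDownset Q D ∧ D.Nonempty ∧ cls (subposet Q D) = c}

/-- `Q` is a witness of the set `Γ` of unlabelled posets (at size `n`): the set of size-`n`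
downsets of `Q`, up to isomorphism, is exactly `Γ`. -/
def IsWitness (n : ℕ) (Γ : Set UPoset) (Q : FinPartOrd.{0}) : Prop := DSet n Q = Γ

/-- `Q` is a minimal witness of `Γ` : `Q` is a witness and no proper downset of `Q` is
itself a witness of `Γ`. -/
def IsMinimalWitness (n : ℕ) (Γ : Set UPoset) (Q : FinPartOrd.{0}) : Prop :=
  IsWitness n Γ Q ∧
    ∀ D : Finset ↥Q, IsDownset Q D → D ≠ Finset.univ → ¬IsWitness n Γ (subposet Q D)

/-- The height of an element: the number of elements of a longest chain whose maximum is `x`. -/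
def heightEl (Q : FinPartOrd.{0}) (x : ↥Q) : ℕ :=
  sSup {k | ∃ c : Finset ↥Q, IsChain (· ≤ ·) (c : Set ↥Q) ∧ x ∈ c ∧ (∀ y ∈ c, y ≤ x) ∧ c.card = k}

/-- The height of a finite poset: the number of elements of a longest chain. -/
def posetHeight (Q : FinPartOrd.{0}) : ℕ :=
  sSup {k | ∃ c : Finset ↥Q, IsChain (· ≤ ·) (c : Set ↥Q) ∧ c.card = k}

/-- A finite poset is Newtonian if every element of level `i` covers every element of
level `i - 1`. -/
def Newtonian (Q : FinPartOrd.{0}) : Prop :=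
  ∀ x y : ↥Q, heightEl Q y = heightEl Q x + 1 → x ⋖ y

/-- A finite poset is connected if it is nonempty and any two elements are joined by a
comparability path. -/
def ConnectedPoset (Q : FinPartOrd.{0}) : Prop :=
  Nonempty ↥Q ∧ ∀ x y : ↥Q, Relation.ReflTransGen (fun a b : ↥Q => a ≤ b ∨ b ≤ a) x y

/-- `x` is a maximal element of the subset `W` of `Q`. -/
def IsMaxIn (Q : FinPartOrd.{0}) (W : Finset ↥Q) (x : ↥Q) : Prop :=
  x ∈ W ∧ ∀ y ∈ W, x ≤ y → y = x

/-- `x` is a maximal element of the finite poset `R`. -/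
def IsMaxEl (R : FinPartOrd.{0}) (x : ↥R) : Prop := ∀ y, x ≤ y → y = x

/-- A poset of type 𝒲 : the disjoint union of two connected Newtonian posets that are not
isomorphic, but which only differ in one maximal element (they become isomorphic after the
removal of a suitable maximal element from each). -/
def TypeW (P : FinPartOrd.{0}) : Prop :=
  ∃ W₁ W₂ : Finset ↥P,
    W₁ ∪ W₂ = Finset.univ ∧ Disjoint W₁ W₂ ∧
    (∀ x ∈ W₁, ∀ y ∈ W₂, ¬x ≤ y ∧ ¬y ≤ x) ∧
    ConnectedPoset (subposet P W₁) ∧ ConnectedPoset (subposet P W₂) ∧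
    Newtonian (subposet P W₁) ∧ Newtonian (subposet P W₂) ∧
    ¬Nonempty (↥(subposet P W₁) ≃o ↥(subposet P W₂)) ∧
    ∃ x y, IsMaxIn P W₁ x ∧ IsMaxIn P W₂ y ∧
      Nonempty (↥(subposet P (W₁.erase x)) ≃o ↥(subposet P (W₂.erase y)))

/-- An antichain on `i` elements. -/
def AntichainFin (i : ℕ) : Type := Fin i

instance (i : ℕ) : PartialOrder (AntichainFin i) where
  le x y := x = y
  le_refl _ := rfl
  le_trans a b c h₁ h₂ := show a = c from (show a = b from h₁).trans (show b = c from h₂)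
  le_antisymm _ _ h _ := h

instance (i : ℕ) : Fintype (AntichainFin i) := inferInstanceAs (Fintype (Fin i))
instance (i : ℕ) : Fintype (WithTop (AntichainFin i)) :=
  inferInstanceAs (Fintype (Option (Fin i)))

/-- `Λ_i`: the poset with `i` minimal elements and one maximal element above all of them. -/
def Lambda (i : ℕ) : FinPartOrd.{0} := FinPartOrd.of (WithTop (AntichainFin i))

/-- `k` disjoint copies of a poset `α`. -/
def Copies (k : ℕ) (α : Type) : Type := Fin k × α

instance (k : ℕ) (α : Type) [PartialOrder α] : PartialOrder (Copies k α) where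
  le x y := x.1 = y.1 ∧ x.2 ≤ y.2
  le_refl _ := ⟨rfl, le_refl _⟩
  le_trans _ _ _ h₁ h₂ := ⟨h₁.1.trans h₂.1, le_trans h₁.2 h₂.2⟩
  le_antisymm x y h₁ h₂ := by
    obtain ⟨x₁, x₂⟩ := x
    obtain ⟨y₁, y₂⟩ := y
    obtain ⟨h, h'⟩ := h₁
    cases h
    exact congrArg _ (le_antisymm h' h₂.2)

instance (k : ℕ) (α : Type) [Fintype α] : Fintype (Copies k α) :=
  inferInstanceAs (Fintype (Fin k × α))

/-- `H_ℓ`: the poset whose connected components are `ℓ` copies of `Λ₂` and one copy of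
`Λ_{3(ℓ-1)}`. -/
def Hposet (ℓ : ℕ) : FinPartOrd.{0} :=
  FinPartOrd.of (Copies ℓ (WithTop (AntichainFin 2)) ⊕ WithTop (AntichainFin (3 * (ℓ - 1))))

/-- The poset `P₀` placed above a chain of `i` elements. -/
def withChain (P₀ : FinPartOrd.{0}) (i : ℕ) : FinPartOrd.{0} :=
  FinPartOrd.of (Fin i ⊕ₗ ↥P₀)

/-- The disjoint union of two finite posets. -/
def disjSum (P R : FinPartOrd.{0}) : FinPartOrd.{0} := FinPartOrd.of (↥P ⊕ ↥R)

/-- The poset `P_iR_i`: the disjoint union of `P₀` and `R₀` each placed above a chain of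
`i` elements. -/
def PRposet (P₀ R₀ : FinPartOrd.{0}) (i : ℕ) : FinPartOrd.{0} :=
  disjSum (withChain P₀ i) (withChain R₀ i)

/-- `C(P₀R₀) = |D(P₀)| + |D(R₀)| − |D(P₀) ∩ D(R₀)|`. -/
def CNum (P₀ R₀ : FinPartOrd.{0}) : ℕ :=
  (DAllSet P₀).ncard + (DAllSet R₀).ncard - (DAllSet P₀ ∩ DAllSet R₀).ncard

/-- The vertices of the exchange graph: the downsets of `Q` of size `n`, as actual subsets. -/
def EGVert (n : ℕ) (Q : FinPartOrd.{0}) : Type :=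
  {D : Finset ↥Q // IsDownset Q D ∧ D.card = n}

/-- The exchange graph `G_n(Q)`: two size-`n` downsets are adjacent iff they differ by
exactly one element. -/
def ExchangeGraph (n : ℕ) (Q : FinPartOrd.{0}) : SimpleGraph (EGVert n Q) where
  Adj X Y := (X.1 \ Y.1).card = 1 ∧ (Y.1 \ X.1).card = 1
  symm := ⟨fun X Y h => ⟨h.2, h.1⟩⟩
  loopless := ⟨fun X h => by
    simp only [Finset.sdiff_self, Finset.card_empty] at h
    exact absurd h.1 (by simp)⟩

/-- The downset `D` of `Q`, viewed as a poset, is isomorphic (a "copy of") `P`. -/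
def IsoTo (Q : FinPartOrd.{0}) (D : Finset ↥Q) (P : FinPartOrd.{0}) : Prop :=
  Nonempty (↥(subposet Q D) ≃o ↥P)

/-- A path `A :: M ++ [C]` in the exchange graph `G_n(Q)` whose first vertex is a copy of
`Pa`, whose last vertex is a copy of `Pb`, and all of whose internal vertices are copies of
`Pmid`. -/
def SpecialPath (n : ℕ) (Q : FinPartOrd.{0}) (Pa Pmid Pb : FinPartOrd.{0})
    (A : EGVert n Q) (M : List (EGVert n Q)) (C : EGVert n Q) : Prop :=
  List.Chain' (ExchangeGraph n Q).Adj (A :: M ++ [C]) ∧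
    IsoTo Q A.1 Pa ∧ IsoTo Q C.1 Pb ∧ ∀ v ∈ M, IsoTo Q v.1 Pmid

/-- `T` is an antichain in `Q`. -/
def IsAntichainIn (Q : FinPartOrd.{0}) (T : Finset ↥Q) : Prop :=
  ∀ x ∈ T, ∀ y ∈ T, x ≤ y → x = y

/-- The possible shapes of `A \ X` and `C \ X`: an antichain possibly together with a single
element below all of it and/or a single element above all of it, or a two-element chain
together with one incomparable element. -/
def GoodForm (Q : FinPartOrd.{0}) (S : Finset ↥Q) : Prop :=
  (∃ T : Finset ↥Q, IsAntichainIn Q T ∧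
    (S = T ∨
      (∃ b, b ∉ T ∧ S = insert b T ∧ ∀ x ∈ T, b < x) ∨
      (∃ t, t ∉ T ∧ S = insert t T ∧ ∀ x ∈ T, x < t) ∨
      (∃ b t, b ∉ T ∧ t ∉ T ∧ b ≠ t ∧ S = insert b (insert t T) ∧
        (∀ x ∈ T, b < x) ∧ ∀ x ∈ T, x < t))) ∨
  (∃ x y z : ↥Q, S = {x, y, z} ∧ x ≠ y ∧ x ≠ z ∧ y ≠ z ∧ x < y ∧
    ¬x ≤ z ∧ ¬z ≤ x ∧ ¬y ≤ z ∧ ¬z ≤ y)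

/-!
Pick, for each of the `k` classes of `Γ`, one `n`-element downset of the witness `Q` realizing
it, and let `U` be their union: a downset with at most `n * k` elements. The downsets of the
induced subposet on a downset `U` are exactly the downsets of `Q` contained in `U`, with the
same isomorphism types, so `U` is again a witness.
-/

abbrev liftFinset {Q : FinPartOrd.{0}} {U : Finset ↥Q} (D : Finset ↥(subposet Q U)) :
    Finset ↥Q :=
  D.map (Function.Embedding.subtype (· ∈ U))

abbrev restrictFinset {Q : FinPartOrd.{0}} (U D : Finset ↥Q) : Finset ↥(subposet Q U) :=
  D.subtype (· ∈ U)

theorem liftFinset_restrictFinset {Q : FinPartOrd.{0}} {U D : Finset ↥Q} (hDU : D ⊆ U) :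
    liftFinset (restrictFinset U D) = D :=
  subtype_map_of_mem hDU

def subposetSubposetIso (Q : FinPartOrd.{0}) (U : Finset ↥Q) (D : Finset ↥(subposet Q U)) :
    ↥(subposet (subposet Q U) D) ≃o ↥(subposet Q (liftFinset D)) where
  toFun y := ⟨y.1.1, mem_map_of_mem _ y.2⟩
  invFun x :=
    have hxU : x.1 ∈ U := by
      obtain ⟨y, -, hy⟩ := mem_map.mp x.2
      exact hy ▸ y.2
    ⟨⟨x.1, hxU⟩, (mem_map' _).mp x.2⟩
  left_inv _ := rfl
  right_inv _ := rfl
  map_rel_iff' := Iff.rfl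

theorem cls_subposet_subposet (Q : FinPartOrd.{0}) (U : Finset ↥Q)
    (D : Finset ↥(subposet Q U)) :
    cls (subposet (subposet Q U) D) = cls (subposet Q (liftFinset D)) :=
  Quotient.sound ⟨subposetSubposetIso Q U D⟩

theorem IsDownset.liftFinset {Q : FinPartOrd.{0}} {U : Finset ↥Q} (hU : IsDownset Q U)
    {D : Finset ↥(subposet Q U)} (hD : IsDownset (subposet Q U) D) :
    IsDownset Q (liftFinset D) := by
  intro a b ha hba
  obtain ⟨a', ha', rfl⟩ := mem_map.mp ha
  exact mem_map_of_mem _ (hD (b := ⟨b, hU a'.2 hba⟩) ha' hba)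

theorem IsDownset.restrictFinset {Q : FinPartOrd.{0}} (U : Finset ↥Q) {D : Finset ↥Q}
    (hD : IsDownset Q D) : IsDownset (subposet Q U) (restrictFinset U D) :=
  fun _ _ ha hba => mem_subtype.mpr (hD (mem_subtype.mp ha) hba)

theorem DSet_subposet_subset {Q : FinPartOrd.{0}} {U : Finset ↥Q} (hU : IsDownset Q U)
    (n : ℕ) : DSet n (subposet Q U) ⊆ DSet n Q := by
  rintro c ⟨D, hD, rfl, rfl⟩
  exact ⟨liftFinset D, hU.liftFinset hD, card_map _, (cls_subposet_subposet Q U D).symm⟩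

theorem cls_mem_DSet_subposet {Q : FinPartOrd.{0}} {U D : Finset ↥Q} (hDU : D ⊆ U)
    (hD : IsDownset Q D) : cls (subposet Q D) ∈ DSet D.card (subposet Q U) := by
  refine ⟨restrictFinset U D, hD.restrictFinset U, ?_, ?_⟩
  · exact (card_map _).symm.trans (congrArg card (liftFinset_restrictFinset hDU))
  · rw [cls_subposet_subposet, liftFinset_restrictFinset hDU]

theorem IsWitness.subposet {n : ℕ} {Γ : Set UPoset} {Q : FinPartOrd.{0}} (hQ : IsWitness n Γ Q)
    {U : Finset ↥Q} (hU : IsDownset Q U)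
    (hΓ : ∀ c ∈ Γ, ∃ D ⊆ U, IsDownset Q D ∧ D.card = n ∧ cls (subposet Q D) = c) :
    IsWitness n Γ (subposet Q U) := by
  refine (hQ ▸ DSet_subposet_subset hU n).antisymm fun c hc => ?_
  obtain ⟨D, hDU, hD, rfl, rfl⟩ := hΓ c hc
  exact cls_mem_DSet_subposet hDU hD

theorem IsDownset.biUnion {Q : FinPartOrd.{0}} {ι : Type*} (s : Finset ι) {f : ι → Finset ↥Q}
    (hf : ∀ i ∈ s, IsDownset Q (f i)) : IsDownset Q (s.biUnion f) := by
  intro a b ha hba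
  obtain ⟨i, hi, hai⟩ := mem_biUnion.mp ha
  exact mem_biUnion.mpr ⟨i, hi, hf i hi hai hba⟩

theorem witness_bound_nk_general (n k : ℕ) (Γ : Set UPoset) (hΓfin : Γ.Finite)
    (hΓcard : Γ.ncard = k)
    (Q : FinPartOrd.{0}) (hQ : IsWitness n Γ Q) :
    ∃ R : FinPartOrd.{0}, IsWitness n Γ R ∧ size R ≤ n * k := by
  have hreal : ∀ c ∈ hΓfin.toFinset,
      ∃ D : Finset ↥Q, IsDownset Q D ∧ D.card = n ∧ cls (subposet Q D) = c := fun c hc =>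
    (Set.ext_iff.mp hQ c).mpr (hΓfin.mem_toFinset.mp hc)
  choose! Dc hDown hCard hCls using hreal
  set U := hΓfin.toFinset.biUnion Dc
  refine ⟨subposet Q U, hQ.subposet (.biUnion _ hDown) fun c hc => ?_, ?_⟩
  · have hc' := hΓfin.mem_toFinset.mpr hc
    exact ⟨Dc c, subset_biUnion_of_mem Dc hc', hDown c hc', hCard c hc', hCls c hc'⟩
  calc size (subposet Q U) = U.card := Fintype.card_coe U
    _ ≤ hΓfin.toFinset.card * n := card_biUnion_le_card_mul _ _ _ fun c hc => (hCard c hc).le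
    _ = n * k := by rw [← Set.ncard_eq_toFinset_card Γ hΓfin, hΓcard, mul_comm]

/-- If a set `Γ` of `k` pairwise non-isomorphic finite posets, each of size
`n`, has a witness, then it has a witness of size at most `n * k`. -/
theorem witness_bound_nk (n k : ℕ) (Γ : Set UPoset) (hΓfin : Γ.Finite)
    (hΓcard : Γ.ncard = k) (hΓsize : ∀ c ∈ Γ, usize c = n)
    (Q : FinPartOrd.{0}) (hQ : IsWitness n Γ Q) :
    ∃ R : FinPartOrd.{0}, IsWitness n Γ R ∧ size R ≤ n * k :=
  witness_bound_nk_general n k Γ hΓfin hΓcard Q hQ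
end
end

section
/- Let P be a poset of type W of size 2n−2 having at most n−1 minimal elements. Then the number of isomorphism classes of downsets of P of size n satisfies d_n(P) = 1 + ⌊n/2⌋. -/
/-!
Formalization framework: finite posets are bundled as `FinPartOrd.{0}`, downsets are
`Finset`s of elements, unlabelled posets are isomorphism classes (`UPoset`), and a witness
of a set `Γ` of unlabelled posets at size `n` is a finite poset whose set of size-`n`
downsets, up to isomorphism, is exactly `Γ`.
-/

attribute [local instance] Classical.propDecidable

noncomputable section

open Finset

/-!
Write `P = W₁ ⊔ W₂` with `W₁ \ {x} ≅ W₂ \ {y}`. In a Newtonian poset `a < b` exactly when `a` lies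
on a lower level than `b`, so a Newtonian poset is determined up to isomorphism by the sizes of
its levels, and a downset of it fills the levels from the bottom up. Hence a size-`n` downset `D`
of `P` is determined up to isomorphism by `s = |D ∩ W₁| ∈ [1, n - 1]`. Downsets of `W₁` and of
`W₂` of the same size `≤ n - 2` can be taken inside `W₁ \ {x} ≅ W₂ \ {y}`, so `s` and `n - s` give
the same class when `2 ≤ s ≤ n - 2`; this leaves the `1 + ⌊n/2⌋` values `{1, n - 1} ∪ [2, n/2]`.

These give distinct classes. The level sizes of `W₁` and `W₂` agree except at the levels `h(x)`
and `h(y)`, which connectedness forces to be `≥ 2`; so both have the same number `m ≤ (n - 1)/2`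
of minimal elements, and the largest principal up-set of the downset for `s` has
`1 + max(s, n - s) - m` elements. Finally `s = 1` and `s = n - 1` are told apart by the
height of the downset, `h(y)` resp. `h(x)`, and these differ since `W₁ ≇ W₂`.
-/

lemma Finset.card_subtype_eq_card_filter {α : Type*} (s : Finset α) (p : α → Prop)
    [DecidablePred p] [Fintype {a : s // p a}] :
    Fintype.card {a : s // p a} = #(s.filter p) := by
  refine (Fintype.card_of_subtype ((s.filter p).subtype (· ∈ s)) fun a => by simp).trans ?_
  rw [card_subtype]
  exact congrArg card (filter_true_of_mem fun z hz => (mem_filter.1 hz).1)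

lemma Finset.card_filter_univ_subtype {α : Type*} (s : Finset α) (p : α → Prop)
    [DecidablePred p] : #((univ : Finset s).filter fun a : s => p a.1) = #(s.filter p) := by
  rw [← Fintype.card_subtype, card_subtype_eq_card_filter]

lemma Finset.sup_eq_sup_of_equiv {α β γ : Type*} [SemilatticeSup γ] [OrderBot γ] {s : Finset α}
    {t : Finset β} (e : s ≃ t) {f : α → γ} {g : β → γ} (h : ∀ a : s, g (e a) = f a) :
    s.sup f = t.sup g := by
  rw [← sup_attach, ← sup_attach t, ← univ_eq_attach, ← univ_eq_attach,
    ← univ_map_equiv_to_embedding e, sup_map]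
  exact sup_congr rfl fun a _ => (h a).symm

theorem Finset.nonempty_orderIso_of_card_filter_eq {α β ι : Type*} [PartialOrder α]
    [PartialOrder β] [DecidableEq ι] (r : ι → ι → Prop) (κ : α → ι) (κ' : β → ι)
    {s : Finset α} {t : Finset β}
    (hs : ∀ a ∈ s, ∀ b ∈ s, a ≤ b ↔ a = b ∨ r (κ a) (κ b))
    (ht : ∀ a ∈ t, ∀ b ∈ t, a ≤ b ↔ a = b ∨ r (κ' a) (κ' b))
    (hcard : ∀ c, #(s.filter (κ · = c)) = #(t.filter (κ' · = c))) : Nonempty (s ≃o t) := by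
  have hfib : ∀ c, Fintype.card {a : s // κ a = c} = Fintype.card {b : t // κ' b = c} :=
    fun c => by
      rw [card_subtype_eq_card_filter s (κ · = c), card_subtype_eq_card_filter t (κ' · = c), hcard]
  let fib := fun c => Fintype.equivOfCardEq (hfib c)
  let e : s ≃ t := Equiv.ofFiberEquiv fib
  have he : ∀ a, κ' (e a) = κ a := Equiv.ofFiberEquiv_map fib
  refine ⟨⟨e, fun {a b} => ?_⟩⟩
  rw [← Subtype.coe_le_coe, ← Subtype.coe_le_coe, hs a a.2 b b.2, ht _ (e a).2 _ (e b).2, he, he,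
    Subtype.coe_inj, Subtype.coe_inj, e.injective.eq_iff]

section Posets

variable {Q Q' : FinPartOrd.{0}}

lemma card_le_heightEl {x : ↥Q} {c : Finset ↥Q} (hc : IsChain (· ≤ ·) (c : Set ↥Q)) (hx : x ∈ c)
    (hle : ∀ y ∈ c, y ≤ x) : #c ≤ heightEl Q x := by
  unfold heightEl
  exact le_csSup ⟨Fintype.card ↥Q, by rintro _ ⟨c, -, -, -, rfl⟩; exact c.card_le_univ⟩
    ⟨c, hc, hx, hle, rfl⟩

lemma exists_chain_card_eq_heightEl (x : ↥Q) :
    ∃ c : Finset ↥Q, IsChain (· ≤ ·) (c : Set ↥Q) ∧ x ∈ c ∧ (∀ y ∈ c, y ≤ x) ∧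
      #c = heightEl Q x := by
  unfold heightEl
  apply Nat.sSup_mem (s := {k | ∃ c : Finset ↥Q, IsChain (· ≤ ·) (c : Set ↥Q) ∧ x ∈ c ∧
    (∀ y ∈ c, y ≤ x) ∧ c.card = k})
  · exact ⟨1, {x}, by simp, by simp, by simp, by simp⟩
  · refine ⟨Fintype.card ↥Q, ?_⟩
    rintro _ ⟨c, -, -, -, rfl⟩
    exact c.card_le_univ

lemma one_le_heightEl (x : ↥Q) : 1 ≤ heightEl Q x :=
  card_le_heightEl (c := {x}) (by simp) (mem_singleton_self x) (by simp)

lemma heightEl_lt_heightEl {x y : ↥Q} (hxy : x < y) : heightEl Q x < heightEl Q y := by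
  obtain ⟨c, hc, hxc, hle, hcard⟩ := exists_chain_card_eq_heightEl x
  have hyc : y ∉ c := fun hy => (hle y hy).not_gt hxy
  have hchain : IsChain (· ≤ ·) (insert y c : Set ↥Q) :=
    hc.insert fun b hb _ => Or.inr ((hle b hb).trans hxy.le)
  have := card_le_heightEl (by rwa [coe_insert]) (mem_insert_self y c) fun z hz =>
    (mem_insert.1 hz).elim (·.le) fun hz => (hle z hz).trans hxy.le
  rw [card_insert_of_notMem hyc] at this
  omega

lemma exists_lt_heightEl_add_one_eq {y : ↥Q} (hy : 2 ≤ heightEl Q y) :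
    ∃ z < y, heightEl Q z + 1 = heightEl Q y := by
  obtain ⟨c, hc, hyc, hle, hcard⟩ := exists_chain_card_eq_heightEl y
  have hne : (c.erase y).Nonempty := by
    rw [← card_pos, card_erase_of_mem hyc]
    omega
  obtain ⟨z, hz, hzmax⟩ := (c.erase y).exists_max_image (heightEl Q) hne
  have hzy : z < y := lt_of_le_of_ne (hle z (mem_of_mem_erase hz)) (ne_of_mem_erase hz)
  -- in a chain, an element of largest height is the maximum
  have hbelow : ∀ w ∈ c.erase y, w ≤ z := fun w hw =>
    (hc.total (mem_of_mem_erase hw) (mem_of_mem_erase hz)).elim id fun hzw =>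
      hzw.eq_or_lt.elim (fun h => h ▸ le_rfl) fun h =>
        absurd (hzmax w hw) (heightEl_lt_heightEl h).not_ge
  have := card_le_heightEl (hc.mono (by simp)) hz hbelow
  have := heightEl_lt_heightEl hzy
  rw [card_erase_of_mem hyc] at *
  exact ⟨z, hzy, by omega⟩

lemma exists_lt_heightEl_eq {y : ↥Q} {i : ℕ} (hi : 1 ≤ i) (hiy : i < heightEl Q y) :
    ∃ z < y, heightEl Q z = i := by
  induction hk : heightEl Q y - i generalizing y with
  | zero => omega
  | succ k ih =>
    obtain ⟨z, hzy, hz⟩ := exists_lt_heightEl_add_one_eq (y := y) (by omega)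
    rcases (show i = heightEl Q z ∨ i < heightEl Q z by omega) with rfl | hiz
    · exact ⟨z, hzy, rfl⟩
    · obtain ⟨w, hwz, hw⟩ := ih hiz (by omega)
      exact ⟨w, hwz.trans hzy, hw⟩

lemma heightEl_eq_one_iff {x : ↥Q} : heightEl Q x = 1 ↔ ∀ y ≤ x, y = x := by
  refine ⟨fun h y hyx => by_contra fun hne => ?_, fun h => by_contra fun hne => ?_⟩
  · have := heightEl_lt_heightEl (lt_of_le_of_ne hyx hne)
    have := one_le_heightEl y
    omega
  · have := one_le_heightEl x
    obtain ⟨z, hzx, -⟩ := exists_lt_heightEl_eq (y := x) le_rfl (by omega)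
    exact hzx.ne (h z hzx.le)

lemma heightEl_le_heightEl_of_orderEmbedding (f : ↥Q ↪o ↥Q') (x : ↥Q) :
    heightEl Q x ≤ heightEl Q' (f x) := by
  obtain ⟨c, hc, hxc, hle, hcard⟩ := exists_chain_card_eq_heightEl x
  rw [← hcard, ← card_map f.toEmbedding]
  refine card_le_heightEl ?_ (mem_map_of_mem _ hxc) ?_
  · rw [coe_map]
    exact hc.image_of_map_rel _ _ _ fun _ _ h => f.monotone h
  · simp only [mem_map, forall_exists_index, and_imp]
    rintro _ z hz rfl
    exact f.monotone (hle z hz)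

lemma heightEl_orderIso (e : ↥Q ≃o ↥Q') (x : ↥Q) : heightEl Q' (e x) = heightEl Q x :=
  le_antisymm (by simpa using heightEl_le_heightEl_of_orderEmbedding e.symm.toOrderEmbedding (e x))
    (heightEl_le_heightEl_of_orderEmbedding e.toOrderEmbedding x)

lemma heightEl_le_card {D : Finset ↥Q} (hD : IsDownset Q D) {x : ↥Q} (hx : x ∈ D) :
    heightEl Q x ≤ #D := by
  obtain ⟨c, -, -, hle, hcard⟩ := exists_chain_card_eq_heightEl x
  exact hcard ▸ card_le_card fun z hz => hD hx (hle z hz)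

lemma heightEl_subposet {D : Finset ↥Q} (hD : IsDownset Q D) {x : ↥Q} (hx : x ∈ D) :
    heightEl (subposet Q D) ⟨x, hx⟩ = heightEl Q x := by
  refine le_antisymm
    (heightEl_le_heightEl_of_orderEmbedding (Q := subposet Q D) (Q' := Q)
      (OrderEmbedding.subtype (· ∈ D)) ⟨x, hx⟩) ?_
  obtain ⟨c, hc, hxc, hle, hcard⟩ := exists_chain_card_eq_heightEl x
  have hcD : c.filter (· ∈ D) = c := filter_true_of_mem fun z hz => hD hx (hle z hz)
  rw [← hcard, ← hcD, ← card_subtype]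
  refine card_le_heightEl (Q := subposet Q D) (x := ⟨x, hx⟩) ?_ (mem_subtype.2 hxc)
    fun y hy => hle y.1 (mem_subtype.1 hy)
  intro a ha b hb hab
  exact hc (mem_subtype.1 ha) (mem_subtype.1 hb) (Subtype.coe_ne_coe.2 hab)

lemma IsDownset.inter {D E : Finset ↥Q} (hD : IsDownset Q D)
    (hE : IsDownset Q E) : IsDownset Q (D ∩ E) := fun _ _ ha hba =>
  mem_inter.2 ⟨hD (mem_inter.1 ha).1 hba, hE (mem_inter.1 ha).2 hba⟩

lemma IsDownset.union {D E : Finset ↥Q} (hD : IsDownset Q D)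
    (hE : IsDownset Q E) : IsDownset Q (D ∪ E) := fun _ _ ha hba =>
  (mem_union.1 ha).elim (fun h => mem_union_left _ (hD h hba)) fun h => mem_union_right _ (hE h hba)

lemma IsDownset.erase {W : Finset ↥Q} (hW : IsDownset Q W) {x : ↥Q}
    (hx : IsMaxIn Q W x) : IsDownset Q (W.erase x) := fun a _ ha hba =>
  mem_erase.2 ⟨fun hbx => (mem_erase.1 ha).1 (hx.2 a (mem_of_mem_erase ha) (hbx ▸ hba)),
    hW (mem_of_mem_erase ha) hba⟩

lemma IsDownset.exists_subset_card_eq {E : Finset ↥Q} (hE : IsDownset Q E)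
    {s : ℕ} (hs : s ≤ #E) : ∃ D ⊆ E, IsDownset Q D ∧ #D = s := by
  induction hk : #E - s generalizing E with
  | zero => exact ⟨E, subset_rfl, hE, by omega⟩
  | succ k ih =>
    obtain ⟨m, hm, hmax⟩ := E.exists_max_image (heightEl Q) (card_pos.1 (by omega))
    have hmE : IsMaxIn Q E m := ⟨hm, fun z hz hmz => hmz.eq_or_lt.elim (·.symm) fun h =>
      absurd (hmax z hz) (heightEl_lt_heightEl h).not_ge⟩
    obtain ⟨D, hDE, hD, hDcard⟩ :=
      ih (hE.erase hmE) (by rw [card_erase_of_mem hm]; omega) (by rw [card_erase_of_mem hm]; omega)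
    exact ⟨D, hDE.trans (erase_subset _ _), hD, hDcard⟩

lemma card_eq_of_orderIso_subposet {D : Finset ↥Q} {D' : Finset ↥Q'}
    (e : ↥(subposet Q D) ≃o ↥(subposet Q' D')) : #D = #D' := by
  let e' : ↥D ≃ ↥D' := e.toEquiv
  simpa using Fintype.card_congr e'

lemma ConnectedPoset.eq_of_forall_le_imp_eq (hQ : ConnectedPoset Q)
    (h : ∀ a b : ↥Q, a ≤ b → a = b) (a b : ↥Q) : a = b := by
  induction hQ.2 a b with
  | refl => rfl
  | tail _ hbc ih => exact ih.trans (hbc.elim (h _ _) fun h' => (h _ _ h').symm)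

lemma heightEl_coe_orderIso_subposet {D : Finset ↥Q} {D' : Finset ↥Q'} (hD : IsDownset Q D)
    (hD' : IsDownset Q' D') (e : ↥(subposet Q D) ≃o ↥(subposet Q' D')) (a : ↥(subposet Q D)) :
    heightEl Q' (e a).1 = heightEl Q a.1 :=
  (heightEl_subposet hD' (e a).2).symm.trans
    ((heightEl_orderIso e a).trans (heightEl_subposet hD a.2))

lemma sup_heightEl_eq_of_orderIso {D : Finset ↥Q} {D' : Finset ↥Q'}
    (hD : IsDownset Q D) (hD' : IsDownset Q' D') (e : ↥(subposet Q D) ≃o ↥(subposet Q' D')) :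
    D.sup (heightEl Q) = D'.sup (heightEl Q') :=
  sup_eq_sup_of_equiv (s := D) (t := D') e.toEquiv (heightEl_coe_orderIso_subposet hD hD' e)

lemma sup_card_filter_le_eq_of_orderIso {D : Finset ↥Q} {D' : Finset ↥Q'}
    (e : ↥(subposet Q D) ≃o ↥(subposet Q' D')) :
    D.sup (fun u => #(D.filter (u ≤ ·))) = D'.sup (fun v => #(D'.filter (v ≤ ·))) :=
  let e' : ↥D ≃o ↥D' := e
  sup_eq_sup_of_equiv e'.toEquiv fun a => calc
    #(D'.filter ((e' a).1 ≤ ·)) = #((univ : Finset D').filter (e' a ≤ ·)) :=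
      (card_filter_univ_subtype D' _).symm
    _ = #((univ : Finset D).filter (a ≤ ·)) := card_equiv e'.symm.toEquiv fun _ => by
      simp [e'.le_symm_apply]
    _ = #(D.filter (a.1 ≤ ·)) := card_filter_univ_subtype D (a.1 ≤ ·)

def levelCount (Q : FinPartOrd.{0}) (D : Finset ↥Q) (i : ℕ) : ℕ :=
  #(D.filter (heightEl Q · = i))

lemma card_filter_heightEl_lt_add_one (E : Finset ↥Q) (i : ℕ) :
    #(E.filter (heightEl Q · < i + 1)) = #(E.filter (heightEl Q · < i)) + levelCount Q E i := by
  rw [levelCount, ← card_union_of_disjoint (disjoint_filter.2 fun _ _ h h' => by omega),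
    ← filter_or]
  exact congrArg card (filter_congr fun _ _ => by omega)

lemma levelCount_erase_add {E : Finset ↥Q} {u : ↥Q} (hu : u ∈ E) (i : ℕ) :
    levelCount Q (E.erase u) i + (if heightEl Q u = i then 1 else 0) = levelCount Q E i := by
  rw [levelCount, levelCount, filter_erase]
  split_ifs with h
  · exact card_erase_add_one (mem_filter.2 ⟨hu, h⟩)
  · rw [erase_eq_of_notMem (by simp [h]), add_zero]

lemma exists_levelCount_eq_of_orderIso {V F : Finset ↥Q} {V' : Finset ↥Q'}
    (hV : IsDownset Q V) (hV' : IsDownset Q' V')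
    (e : ↥(subposet Q V) ≃o ↥(subposet Q' V')) (hF : IsDownset Q F) (hFV : F ⊆ V) :
    ∃ F' ⊆ V', IsDownset Q' F' ∧ #F' = #F ∧ ∀ i, levelCount Q' F' i = levelCount Q F i := by
  let ι : ↥(subposet Q V) ↪ ↥Q' := e.toEquiv.toEmbedding.trans (Function.Embedding.subtype _)
  have hcard : ∀ (p : ↥Q → Prop) [DecidablePred p],
      #(univ.filter fun a : ↥(subposet Q V) => a.1 ∈ F ∧ p a.1) = #(F.filter p) := fun p _ => by
    refine (card_filter_univ_subtype V (fun x => x ∈ F ∧ p x)).trans ?_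
    rw [← filter_filter, filter_mem_eq_inter, inter_eq_right.2 hFV]
  refine ⟨(univ.filter fun a : ↥(subposet Q V) => a.1 ∈ F).map ι, ?_, ?_, ?_, fun i => ?_⟩
  · simp only [subset_iff, mem_map, mem_filter]
    rintro _ ⟨a, -, rfl⟩
    exact (e a).2
  · simp only [IsDownset, mem_map, mem_filter, mem_univ, true_and]
    rintro _ c ⟨a, haF, rfl⟩ hca
    have hc : c ∈ V' := hV' (e a).2 hca
    refine ⟨e.symm ⟨c, hc⟩, hF haF ?_, congrArg Subtype.val (e.apply_symm_apply _)⟩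
    exact e.symm_apply_le.2 hca
  · simpa using hcard fun _ => True
  · rw [levelCount, filter_map, card_map, filter_filter]
    refine (congrArg card (filter_congr fun a _ => ?_)).trans (hcard (heightEl Q · = i))
    exact and_congr_right fun _ => by rw [← heightEl_coe_orderIso_subposet hV hV' e a]; rfl

lemma levelCount_eq_of_orderIso {V : Finset ↥Q} {V' : Finset ↥Q'}
    (hV : IsDownset Q V) (hV' : IsDownset Q' V') (e : ↥(subposet Q V) ≃o ↥(subposet Q' V'))
    (i : ℕ) : levelCount Q' V' i = levelCount Q V i := by
  obtain ⟨F', hF'V', -, hcard, hlevel⟩ := exists_levelCount_eq_of_orderIso hV hV' e hV subset_rfl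
  rw [← hlevel, eq_of_subset_of_card_le hF'V' (hcard ▸ (card_eq_of_orderIso_subposet e).ge)]

lemma Newtonian.lt_of_heightEl_lt (hN : Newtonian Q) {x y : ↥Q}
    (h : heightEl Q x < heightEl Q y) : x < y := by
  obtain hxy | hxy := (Nat.succ_le_of_lt h).eq_or_lt
  · exact (hN x y hxy.symm).lt
  · obtain ⟨z, hzy, hz⟩ := exists_lt_heightEl_eq (y := y) (Nat.le_add_left 1 _) hxy
    exact (hN x z hz).lt.trans hzy

end Posets

def IsNewtonianDownset (Q : FinPartOrd.{0}) (W : Finset ↥Q) : Prop :=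
  IsDownset Q W ∧ Newtonian (subposet Q W)

namespace IsNewtonianDownset

variable {Q : FinPartOrd.{0}} {W E E' : Finset ↥Q}

lemma lt_of_heightEl_lt (hW : IsNewtonianDownset Q W) {a b : ↥Q} (ha : a ∈ W) (hb : b ∈ W)
    (h : heightEl Q a < heightEl Q b) : a < b :=
  hW.2.lt_of_heightEl_lt (x := ⟨a, ha⟩) (y := ⟨b, hb⟩)
    (by rwa [heightEl_subposet hW.1, heightEl_subposet hW.1])

lemma le_iff (hW : IsNewtonianDownset Q W) {a b : ↥Q} (ha : a ∈ W) (hb : b ∈ W) :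
    a ≤ b ↔ a = b ∨ heightEl Q a < heightEl Q b :=
  ⟨fun h => h.eq_or_lt.imp_right heightEl_lt_heightEl,
    fun h => h.elim (·.le) fun h => (hW.lt_of_heightEl_lt ha hb h).le⟩

lemma mem_of_heightEl_lt (hW : IsNewtonianDownset Q W) (hE : IsDownset Q E) (hEW : E ⊆ W)
    {w z : ↥Q} (hw : w ∈ E) (hz : z ∈ W) (h : heightEl Q z < heightEl Q w) : z ∈ E :=
  hE hw (hW.lt_of_heightEl_lt hz (hEW hw) h).le

lemma heightEl_le_of_isMaxIn (hW : IsNewtonianDownset Q W) {x w : ↥Q} (hx : IsMaxIn Q W x)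
    (hw : w ∈ W) : heightEl Q w ≤ heightEl Q x :=
  not_lt.1 fun h =>
    (hW.lt_of_heightEl_lt hx.1 hw h).ne' (hx.2 w hw (hW.lt_of_heightEl_lt hx.1 hw h).le)

lemma card_filter_heightEl_lt (hW : IsNewtonianDownset Q W) (hE : IsDownset Q E) (hEW : E ⊆ W)
    (k : ℕ) : #(E.filter (heightEl Q · < k)) = min #E #(W.filter (heightEl Q · < k)) := by
  by_cases hall : ∀ w ∈ E, heightEl Q w < k
  · rw [filter_true_of_mem hall, min_eq_left]
    exact card_le_card fun z hz => mem_filter.2 ⟨hEW hz, hall z hz⟩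
  · push Not at hall
    obtain ⟨w, hw, hkw⟩ := hall
    have hEk : E.filter (heightEl Q · < k) = W.filter (heightEl Q · < k) := by
      ext z
      simp only [mem_filter]
      exact ⟨fun h => ⟨hEW h.1, h.2⟩,
        fun h => ⟨hW.mem_of_heightEl_lt hE hEW hw h.1 (by omega), h.2⟩⟩
    rw [hEk, min_eq_right (hEk ▸ card_le_card (filter_subset _ _))]

lemma levelCount_eq_of_card_eq
    (hW : IsNewtonianDownset Q W) (hE : IsDownset Q E) (hE' : IsDownset Q E') (hEW : E ⊆ W)
    (hE'W : E' ⊆ W) (hcard : #E = #E') (i : ℕ) : levelCount Q E i = levelCount Q E' i := by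
  have h := card_filter_heightEl_lt_add_one E i
  have h' := card_filter_heightEl_lt_add_one E' i
  rw [hW.card_filter_heightEl_lt hE hEW, hW.card_filter_heightEl_lt hE hEW, hcard,
    ← hW.card_filter_heightEl_lt hE' hE'W, ← hW.card_filter_heightEl_lt hE' hE'W] at h
  omega

lemma card_filter_one_lt_heightEl (hW : IsNewtonianDownset Q W) (hE : IsDownset Q E)
    (hEW : E ⊆ W) : #(E.filter (1 < heightEl Q ·)) = #E - levelCount Q W 1 := by
  have hsplit := card_filter_add_card_filter_not (s := E) (heightEl Q · < 2)
  have hlow : #(W.filter (heightEl Q · < 2)) = levelCount Q W 1 :=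
    congrArg card (filter_congr fun z _ => by have := one_le_heightEl z; omega)
  rw [hW.card_filter_heightEl_lt hE hEW, hlow] at hsplit
  rw [← hsplit, show E.filter (1 < heightEl Q ·) = E.filter (¬heightEl Q · < 2) from
    filter_congr fun _ _ => by omega]
  omega

lemma sup_card_filter_le (hW : IsNewtonianDownset Q W) (hE : IsDownset Q E) (hEW : E ⊆ W)
    (hne : E.Nonempty) :
    E.sup (fun u => #(E.filter (u ≤ ·))) = 1 + (#E - levelCount Q W 1) := by
  rw [← hW.card_filter_one_lt_heightEl hE hEW]
  obtain ⟨u, huE, hu⟩ : ∃ u ∈ E, heightEl Q u = 1 := by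
    obtain ⟨w, hw⟩ := hne
    by_cases hw1 : heightEl Q w = 1
    · exact ⟨w, hw, hw1⟩
    · obtain ⟨z, hzw, hz⟩ := exists_lt_heightEl_eq (y := w) le_rfl
        (by have := one_le_heightEl w; omega)
      exact ⟨z, hE hw hzw.le, hz⟩
  have hfilter : E.filter (u ≤ ·) = insert u (E.filter (1 < heightEl Q ·)) := by
    ext z
    simp only [mem_filter, mem_insert]
    constructor
    · rintro ⟨hzE, huz⟩
      exact ((hW.le_iff (hEW huE) (hEW hzE)).1 huz).imp Eq.symm fun h => ⟨hzE, hu ▸ h⟩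
    · rintro (rfl | ⟨hzE, hz⟩)
      · exact ⟨huE, le_rfl⟩
      · exact ⟨hzE, (hW.lt_of_heightEl_lt (hEW huE) (hEW hzE) (hu ▸ hz)).le⟩
  have hu' : u ∉ E.filter (1 < heightEl Q ·) := by simp [hu]
  refine le_antisymm (Finset.sup_le fun v hv => ?_) (le_sup_of_le huE ?_)
  · refine (card_le_card fun z hz => ?_).trans ((card_insert_le v _).trans_eq (add_comm _ _))
    obtain ⟨hzE, hvz⟩ := mem_filter.1 hz
    rcases (hW.le_iff (hEW hv) (hEW hzE)).1 hvz with rfl | hlt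
    · exact mem_insert_self _ _
    · exact mem_insert_of_mem (mem_filter.2 ⟨hzE, (one_le_heightEl v).trans_lt hlt⟩)
  · rw [hfilter, card_insert_of_notMem hu', add_comm]

lemma nonempty_orderIso_of_levelCount_eq {Q' : FinPartOrd.{0}} {W' : Finset ↥Q'}
    (hW : IsNewtonianDownset Q W) (hW' : IsNewtonianDownset Q' W') (h : ∀ i, levelCount Q W i = levelCount Q' W' i) :
    Nonempty (↥(subposet Q W) ≃o ↥(subposet Q' W')) :=
  nonempty_orderIso_of_card_filter_eq (· < ·) (heightEl Q) (heightEl Q')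
    (fun _ ha _ hb => hW.le_iff ha hb) (fun _ ha _ hb => hW'.le_iff ha hb) h

end IsNewtonianDownset

structure NewtonianSplit (P : FinPartOrd.{0}) (W₁ W₂ : Finset ↥P) : Prop where
  union_eq : W₁ ∪ W₂ = univ
  disjoint : Disjoint W₁ W₂
  incomparable : ∀ a ∈ W₁, ∀ b ∈ W₂, ¬a ≤ b ∧ ¬b ≤ a
  newtonian_left : Newtonian (subposet P W₁)
  newtonian_right : Newtonian (subposet P W₂)

namespace NewtonianSplit

variable {P : FinPartOrd.{0}} {W₁ W₂ D D' : Finset ↥P} {x y : ↥P} {n : ℕ} {R : ℕ → Finset ↥P}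

lemma symm (hP : NewtonianSplit P W₁ W₂) : NewtonianSplit P W₂ W₁ :=
  ⟨union_comm W₁ W₂ ▸ hP.union_eq, hP.disjoint.symm,
    fun a ha b hb => (hP.incomparable b hb a ha).symm, hP.newtonian_right, hP.newtonian_left⟩

lemma mem_right_iff (hP : NewtonianSplit P W₁ W₂) (z : ↥P) : z ∈ W₂ ↔ z ∉ W₁ :=
  ⟨fun h h' => disjoint_left.1 hP.disjoint h' h,
    fun h => (mem_union.1 (hP.union_eq ▸ mem_univ z)).resolve_left h⟩

lemma isNewtonianDownset_left (hP : NewtonianSplit P W₁ W₂) : IsNewtonianDownset P W₁ :=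
  ⟨fun a b ha hba => by_contra fun hb =>
    (hP.incomparable a ha b ((hP.mem_right_iff b).2 hb)).2 hba, hP.newtonian_left⟩

lemma isNewtonianDownset_right (hP : NewtonianSplit P W₁ W₂) : IsNewtonianDownset P W₂ :=
  hP.symm.isNewtonianDownset_left

lemma le_iff (hP : NewtonianSplit P W₁ W₂) {a b : ↥P} :
    a ≤ b ↔ a = b ∨ ((a ∈ W₁ ↔ b ∈ W₁) ∧ heightEl P a < heightEl P b) := by
  by_cases ha : a ∈ W₁ <;> by_cases hb : b ∈ W₁
  · simp [ha, hb, hP.isNewtonianDownset_left.le_iff ha hb]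
  · simp [ha, hb, (hP.incomparable a ha b ((hP.mem_right_iff b).2 hb)).1,
      ne_of_mem_of_not_mem ha hb]
  · simp [ha, hb, (hP.incomparable b hb a ((hP.mem_right_iff a).2 ha)).2,
      (ne_of_mem_of_not_mem hb ha).symm]
  · simp [ha, hb, hP.isNewtonianDownset_right.le_iff ((hP.mem_right_iff a).2 ha)
      ((hP.mem_right_iff b).2 hb)]

lemma mem_left_of_le (hP : NewtonianSplit P W₁ W₂) {a b : ↥P} (ha : a ∈ W₁) (hab : a ≤ b) :
    b ∈ W₁ :=
  (hP.le_iff.1 hab).elim (· ▸ ha) fun h => h.1.1 ha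

lemma inter_union_inter (hP : NewtonianSplit P W₁ W₂) (D : Finset ↥P) :
    D ∩ W₁ ∪ D ∩ W₂ = D := by
  rw [← inter_union_distrib_left, hP.union_eq, inter_univ]

lemma card_inter_add_card_inter (hP : NewtonianSplit P W₁ W₂) (D : Finset ↥P) :
    #(D ∩ W₁) + #(D ∩ W₂) = #D := by
  rw [← card_union_of_disjoint (hP.disjoint.mono inter_subset_right inter_subset_right),
    hP.inter_union_inter]

lemma filter_component_level_eq (hP : NewtonianSplit P W₁ W₂) (D : Finset ↥P) (b : Bool) (i : ℕ) :
    D.filter (fun z => (decide (z ∈ W₁), heightEl P z) = (b, i)) =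
      (D ∩ cond b W₁ W₂).filter (heightEl P · = i) := by
  ext z
  cases b <;> simp [hP.mem_right_iff, and_assoc]

lemma cls_eq_of_levelCount_eq {P' : FinPartOrd.{0}} {W₁' W₂' E : Finset ↥P'}
    (hP : NewtonianSplit P W₁ W₂) (hP' : NewtonianSplit P' W₁' W₂')
    (h₁ : ∀ i, levelCount P (D ∩ W₁) i = levelCount P' (E ∩ W₁') i)
    (h₂ : ∀ i, levelCount P (D ∩ W₂) i = levelCount P' (E ∩ W₂') i) :
    cls (subposet P D) = cls (subposet P' E) := by
  refine Quotient.sound <| nonempty_orderIso_of_card_filter_eq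
    (fun p q : Bool × ℕ => p.1 = q.1 ∧ p.2 < q.2)
    (fun a => (decide (a ∈ W₁), heightEl P a)) (fun b => (decide (b ∈ W₁'), heightEl P' b))
    (fun a _ b _ => ?_) (fun a _ b _ => ?_) ?_
  · rw [decide_eq_decide]
    exact hP.le_iff
  · rw [decide_eq_decide]
    exact hP'.le_iff
  · rintro ⟨_ | _, i⟩
    · rw [hP.filter_component_level_eq, hP'.filter_component_level_eq]
      exact h₂ i
    · rw [hP.filter_component_level_eq, hP'.filter_component_level_eq]
      exact h₁ i

lemma card_filter_minimal (hP : NewtonianSplit P W₁ W₂) :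
    #(univ.filter fun z : ↥P => ∀ w : ↥P, w ≤ z → w = z) =
      levelCount P W₁ 1 + levelCount P W₂ 1 := by
  rw [levelCount, levelCount, ← card_union_of_disjoint (disjoint_filter_filter hP.disjoint),
    ← filter_union, hP.union_eq]
  exact congrArg card (filter_congr fun z _ => heightEl_eq_one_iff.symm)

lemma sup_card_filter_le (hP : NewtonianSplit P W₁ W₂) (hD : IsDownset P D)
    (h₁ : (D ∩ W₁).Nonempty) (h₂ : (D ∩ W₂).Nonempty) :
    D.sup (fun u => #(D.filter (u ≤ ·))) =
      max (1 + (#(D ∩ W₁) - levelCount P W₁ 1)) (1 + (#(D ∩ W₂) - levelCount P W₂ 1)) := by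
  have hside : ∀ {W W' : Finset ↥P}, NewtonianSplit P W W' → ∀ u ∈ D ∩ W,
      #(D.filter (u ≤ ·)) = #((D ∩ W).filter (u ≤ ·)) := fun hP u hu =>
    congrArg card <| by
      ext z
      simp only [mem_filter, mem_inter]
      exact ⟨fun ⟨hz, huz⟩ => ⟨⟨hz, hP.mem_left_of_le (mem_inter.1 hu).2 huz⟩, huz⟩,
        fun ⟨⟨hz, _⟩, huz⟩ => ⟨hz, huz⟩⟩
  calc D.sup (fun u => #(D.filter (u ≤ ·)))
      = (D ∩ W₁ ∪ D ∩ W₂).sup (fun u => #(D.filter (u ≤ ·))) := by rw [hP.inter_union_inter]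
    _ = max ((D ∩ W₁).sup fun u => #((D ∩ W₁).filter (u ≤ ·)))
          ((D ∩ W₂).sup fun u => #((D ∩ W₂).filter (u ≤ ·))) := by
      rw [sup_union, sup_congr rfl (hside hP), sup_congr rfl (hside hP.symm)]
    _ = _ := by
      rw [hP.isNewtonianDownset_left.sup_card_filter_le (hD.inter hP.isNewtonianDownset_left.1)
        inter_subset_right h₁, hP.isNewtonianDownset_right.sup_card_filter_le
        (hD.inter hP.isNewtonianDownset_right.1) inter_subset_right h₂]

lemma sup_heightEl_eq (hP : NewtonianSplit P W₁ W₂) (hy : IsMaxIn P W₂ y) (hD : IsDownset P D)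
    (h₁ : #(D ∩ W₁) ≤ 1) (h₂ : #W₂ ≤ #(D ∩ W₂)) : D.sup (heightEl P) = heightEl P y := by
  have hyD : y ∈ D := (mem_inter.1 (eq_of_subset_of_card_le inter_subset_right h₂ ▸ hy.1)).1
  refine le_antisymm (Finset.sup_le fun z hz => ?_) (le_sup hyD)
  by_cases hz₁ : z ∈ W₁
  · calc heightEl P z ≤ #(D ∩ W₁) :=
          heightEl_le_card (hD.inter hP.isNewtonianDownset_left.1) (mem_inter.2 ⟨hz, hz₁⟩)
      _ ≤ heightEl P y := h₁.trans (one_le_heightEl y)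
  · exact hP.isNewtonianDownset_right.heightEl_le_of_isMaxIn hy ((hP.mem_right_iff z).2 hz₁)

lemma levelCount_add_eq (hP : NewtonianSplit P W₁ W₂) (hx : IsMaxIn P W₁ x)
    (hy : IsMaxIn P W₂ y) (ψ : ↥(subposet P (W₁.erase x)) ≃o ↥(subposet P (W₂.erase y)))
    (i : ℕ) :
    levelCount P W₁ i + (if heightEl P y = i then 1 else 0) =
      levelCount P W₂ i + (if heightEl P x = i then 1 else 0) := by
  rw [← levelCount_erase_add hx.1 i, ← levelCount_erase_add hy.1 i,
    levelCount_eq_of_orderIso (hP.isNewtonianDownset_left.1.erase hx)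
      (hP.isNewtonianDownset_right.1.erase hy) ψ]
  omega

lemma heightEl_ne (hP : NewtonianSplit P W₁ W₂) (hx : IsMaxIn P W₁ x) (hy : IsMaxIn P W₂ y)
    (ψ : ↥(subposet P (W₁.erase x)) ≃o ↥(subposet P (W₂.erase y)))
    (hniso : ¬Nonempty (↥(subposet P W₁) ≃o ↥(subposet P W₂))) :
    heightEl P x ≠ heightEl P y := fun hxy =>
  hniso <| hP.isNewtonianDownset_left.nonempty_orderIso_of_levelCount_eq
    hP.isNewtonianDownset_right fun i => by
      have := hP.levelCount_add_eq hx hy ψ i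
      rw [hxy] at this
      omega

lemma two_le_heightEl (hP : NewtonianSplit P W₁ W₂) (hx : IsMaxIn P W₁ x) (hy : IsMaxIn P W₂ y)
    (hconn : ConnectedPoset (subposet P W₁))
    (hcard : #W₁ = #W₂) (hxy : heightEl P x ≠ heightEl P y) : 2 ≤ heightEl P x := by
  by_contra hlt
  have hW := hP.isNewtonianDownset_left
  have hlevel : ∀ w ∈ W₁, heightEl P w = 1 := fun w hw => by
    have := hW.heightEl_le_of_isMaxIn hx hw
    have := one_le_heightEl w
    omega
  have hpoint := hconn.eq_of_forall_le_imp_eq fun a b hab =>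
    Subtype.ext <| ((hW.le_iff a.2 b.2).1 hab).resolve_right
      (by rw [hlevel _ a.2, hlevel _ b.2]; omega)
  have hW₁ : #W₁ ≤ 1 := card_le_one.2 fun a ha b hb => congrArg Subtype.val (hpoint ⟨a, ha⟩ ⟨b, hb⟩)
  have := heightEl_le_card hP.isNewtonianDownset_right.1 hy.1
  have := one_le_heightEl y
  exact hxy (by rw [hlevel x hx.1]; omega)

lemma levelCount_eq_of_card_eq (hP : NewtonianSplit P W₁ W₂) (hx : IsMaxIn P W₁ x)
    (hy : IsMaxIn P W₂ y) (ψ : ↥(subposet P (W₁.erase x)) ≃o ↥(subposet P (W₂.erase y)))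
    {E₁ E₂ : Finset ↥P} (hE₁ : IsDownset P E₁) (hE₂ : IsDownset P E₂) (hE₁W : E₁ ⊆ W₁)
    (hE₂W : E₂ ⊆ W₂) (hcard : #E₁ = #E₂) (hlt : #E₁ < #W₁) (i : ℕ) :
    levelCount P E₁ i = levelCount P E₂ i := by
  have hV₁ := hP.isNewtonianDownset_left.1.erase hx
  obtain ⟨F, hFV, hF, hFcard⟩ :=
    hV₁.exists_subset_card_eq (s := #E₁) (by rw [card_erase_of_mem hx.1]; omega)
  obtain ⟨F', hF'V, hF', hF'card, hF'level⟩ :=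
    exists_levelCount_eq_of_orderIso hV₁ (hP.isNewtonianDownset_right.1.erase hy) ψ hF hFV
  rw [hP.isNewtonianDownset_left.levelCount_eq_of_card_eq hE₁ hF hE₁W
      (hFV.trans (erase_subset _ _)) hFcard.symm, ← hF'level,
    hP.isNewtonianDownset_right.levelCount_eq_of_card_eq hF' hE₂
      (hF'V.trans (erase_subset _ _)) hE₂W (by omega)]

lemma cls_eq_of_card_inter_eq (hP : NewtonianSplit P W₁ W₂) (hD : IsDownset P D)
    (hD' : IsDownset P D') (h₁ : #(D ∩ W₁) = #(D' ∩ W₁)) (hcard : #D = #D') :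
    cls (subposet P D) = cls (subposet P D') := by
  have h₂ : #(D ∩ W₂) = #(D' ∩ W₂) := by
    have := hP.card_inter_add_card_inter D
    have := hP.card_inter_add_card_inter D'
    omega
  exact hP.cls_eq_of_levelCount_eq hP
    (hP.isNewtonianDownset_left.levelCount_eq_of_card_eq (hD.inter hP.isNewtonianDownset_left.1)
      (hD'.inter hP.isNewtonianDownset_left.1) inter_subset_right inter_subset_right h₁)
    (hP.isNewtonianDownset_right.levelCount_eq_of_card_eq (hD.inter hP.isNewtonianDownset_right.1)
      (hD'.inter hP.isNewtonianDownset_right.1) inter_subset_right inter_subset_right h₂)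

lemma cls_eq_of_card_inter_eq_swap (hP : NewtonianSplit P W₁ W₂) (hx : IsMaxIn P W₁ x)
    (hy : IsMaxIn P W₂ y) (ψ : ↥(subposet P (W₁.erase x)) ≃o ↥(subposet P (W₂.erase y)))
    (hD : IsDownset P D) (hD' : IsDownset P D') (h₁ : #(D ∩ W₁) = #(D' ∩ W₂))
    (h₂ : #(D ∩ W₂) = #(D' ∩ W₁)) (hlt₁ : #(D ∩ W₁) < #W₁) (hlt₂ : #(D ∩ W₂) < #W₁) :
    cls (subposet P D) = cls (subposet P D') := by
  have hW₁ := hP.isNewtonianDownset_left.1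
  have hW₂ := hP.isNewtonianDownset_right.1
  exact hP.cls_eq_of_levelCount_eq hP.symm
    (hP.levelCount_eq_of_card_eq hx hy ψ (hD.inter hW₁) (hD'.inter hW₂) inter_subset_right
      inter_subset_right h₁ hlt₁)
    fun i => (hP.levelCount_eq_of_card_eq hx hy ψ (hD'.inter hW₁) (hD.inter hW₂)
      inter_subset_right inter_subset_right h₂.symm (h₂ ▸ hlt₂) i).symm

lemma exists_downset_card_inter_eq (hP : NewtonianSplit P W₁ W₂) {s : ℕ} (hsn : s ≤ n)
    (h₁ : s ≤ #W₁) (h₂ : n - s ≤ #W₂) : ∃ D, IsDownset P D ∧ #D = n ∧ #(D ∩ W₁) = s := by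
  obtain ⟨E₁, hE₁W, hE₁, hE₁card⟩ := hP.isNewtonianDownset_left.1.exists_subset_card_eq h₁
  obtain ⟨E₂, hE₂W, hE₂, hE₂card⟩ := hP.isNewtonianDownset_right.1.exists_subset_card_eq h₂
  have hinter : (E₁ ∪ E₂) ∩ W₁ = E₁ := by
    rw [union_inter_distrib_right, inter_eq_left.2 hE₁W,
      disjoint_iff_inter_eq_empty.1 (hP.disjoint.symm.mono_left hE₂W), union_empty]
  refine ⟨E₁ ∪ E₂, hE₁.union hE₂, ?_, by rw [hinter, hE₁card]⟩
  rw [card_union_of_disjoint (hP.disjoint.mono hE₁W hE₂W)]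
  omega

lemma dSet_eq_image (hP : NewtonianSplit P W₁ W₂) (hx : IsMaxIn P W₁ x) (hy : IsMaxIn P W₂ y)
    (ψ : ↥(subposet P (W₁.erase x)) ≃o ↥(subposet P (W₂.erase y))) (hW₁ : #W₁ = n - 1)
    (hW₂ : #W₂ = n - 1)
    (hR : ∀ s, 1 ≤ s ∧ s ≤ n - 1 → IsDownset P (R s) ∧ #(R s) = n ∧ #(R s ∩ W₁) = s) :
    DSet n P =
      (fun s => cls (subposet P (R s))) '' ↑(insert 1 (insert (n - 1) (Icc 2 (n / 2)))) := by
  have hn : 1 ≤ #W₁ := card_pos.2 ⟨x, hx.1⟩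
  ext c
  simp only [DSet, Set.mem_ofPred_eq, Set.mem_image, coe_insert, coe_Icc, Set.mem_insert_iff,
    Set.mem_Icc]
  constructor
  · rintro ⟨D, hD, hDcard, rfl⟩
    have hsum := hP.card_inter_add_card_inter D
    have h₁ := card_le_card (inter_subset_right : D ∩ W₁ ⊆ W₁)
    have h₂ := card_le_card (inter_subset_right : D ∩ W₂ ⊆ W₂)
    by_cases hs : #(D ∩ W₁) = 1 ∨ #(D ∩ W₁) = n - 1 ∨ 2 ≤ #(D ∩ W₁) ∧ #(D ∩ W₁) ≤ n / 2
    · obtain ⟨hR₁, hR₂, hR₃⟩ := hR (#(D ∩ W₁)) ⟨by omega, by omega⟩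
      exact ⟨_, hs, hP.cls_eq_of_card_inter_eq hR₁ hD hR₃ (by omega)⟩
    · -- then `#(D ∩ W₂)` is a representative size and `D` is a swap of its representative
      obtain ⟨hR₁, hR₂, hR₃⟩ := hR (#(D ∩ W₂)) ⟨by omega, by omega⟩
      have := hP.card_inter_add_card_inter (R (#(D ∩ W₂)))
      exact ⟨_, by omega, hP.cls_eq_of_card_inter_eq_swap hx hy ψ hR₁ hD (by omega) (by omega)
        (by omega) (by omega)⟩
  · rintro ⟨s, hs, rfl⟩
    obtain ⟨hR₁, hR₂, -⟩ := hR s ⟨by omega, by omega⟩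
    exact ⟨R s, hR₁, hR₂, rfl⟩

lemma injOn_cls (hP : NewtonianSplit P W₁ W₂) (hx : IsMaxIn P W₁ x) (hy : IsMaxIn P W₂ y)
    (hxy : heightEl P x ≠ heightEl P y) (hW₁ : #W₁ = n - 1) (hW₂ : #W₂ = n - 1)
    (hlevel : levelCount P W₁ 1 = levelCount P W₂ 1) (hmin : 2 * levelCount P W₁ 1 ≤ n - 1)
    (hR : ∀ s, 1 ≤ s ∧ s ≤ n - 1 → IsDownset P (R s) ∧ #(R s) = n ∧ #(R s ∩ W₁) = s) :
    Set.InjOn (fun s => cls (subposet P (R s))) ↑(insert 1 (insert (n - 1) (Icc 2 (n / 2)))) := by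
  have hn : 1 ≤ #W₁ := card_pos.2 ⟨x, hx.1⟩
  have hR₂ : ∀ s, 1 ≤ s ∧ s ≤ n - 1 → #(R s ∩ W₂) = n - s := fun s hs => by
    have := hP.card_inter_add_card_inter (R s)
    have := hR s hs
    omega
  -- `R 1` contains the whole of `W₂`, hence `y`, and `R (n - 1)` the whole of `W₁`
  have h1 : cls (subposet P (R 1)) ≠ cls (subposet P (R (n - 1))) := fun heq => by
    obtain ⟨e⟩ := Quotient.exact heq
    obtain ⟨hD, -, hD₁⟩ := hR 1 ⟨le_rfl, by omega⟩
    obtain ⟨hD', -, hD'₁⟩ := hR (n - 1) ⟨by omega, le_rfl⟩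
    have := hR₂ 1 ⟨le_rfl, by omega⟩
    have := hR₂ (n - 1) ⟨by omega, le_rfl⟩
    have hheight := sup_heightEl_eq_of_orderIso hD hD' e
    rw [hP.sup_heightEl_eq hy hD (by omega) (by omega),
      hP.symm.sup_heightEl_eq hx hD' (by omega) (by omega)] at hheight
    exact hxy hheight.symm
  intro s hs s' hs' heq
  simp only [coe_insert, coe_Icc, Set.mem_insert_iff, Set.mem_Icc] at hs hs'
  obtain ⟨hD, -, hDs⟩ := hR s ⟨by omega, by omega⟩
  obtain ⟨hD', -, hD's⟩ := hR s' ⟨by omega, by omega⟩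
  have hDs₂ := hR₂ s ⟨by omega, by omega⟩
  have hD's₂ := hR₂ s' ⟨by omega, by omega⟩
  obtain ⟨e⟩ := Quotient.exact heq
  have hup := sup_card_filter_le_eq_of_orderIso e
  rw [hP.sup_card_filter_le hD (card_pos.1 (by omega)) (card_pos.1 (by omega)),
    hP.sup_card_filter_le hD' (card_pos.1 (by omega)) (card_pos.1 (by omega)),
    hDs, hD's, hDs₂, hD's₂, ← hlevel] at hup
  by_contra hne
  obtain ⟨rfl, rfl⟩ | ⟨rfl, rfl⟩ : s = 1 ∧ s' = n - 1 ∨ s = n - 1 ∧ s' = 1 := by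
    rcases hs with rfl | rfl | hs <;> rcases hs' with rfl | rfl | hs' <;> omega
  exacts [h1 heq, h1 heq.symm]

lemma dNum_eq (hP : NewtonianSplit P W₁ W₂) (hx : IsMaxIn P W₁ x) (hy : IsMaxIn P W₂ y)
    (ψ : ↥(subposet P (W₁.erase x)) ≃o ↥(subposet P (W₂.erase y)))
    (hxy : heightEl P x ≠ heightEl P y) (hW₁ : #W₁ = n - 1) (hW₂ : #W₂ = n - 1)
    (hlevel : levelCount P W₁ 1 = levelCount P W₂ 1) (hmin : 2 * levelCount P W₁ 1 ≤ n - 1)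
    (hn : 3 ≤ n) : dNum n P = 1 + n / 2 := by
  choose! R hR using fun s (hs : 1 ≤ s ∧ s ≤ n - 1) =>
    hP.exists_downset_card_inter_eq (n := n) (s := s) (by omega) (by omega) (by omega)
  rw [dNum, hP.dSet_eq_image hx hy ψ hW₁ hW₂ hR,
    (hP.injOn_cls hx hy hxy hW₁ hW₂ hlevel hmin hR).ncard_image,
    Set.ncard_coe_finset, card_insert_of_notMem (by simp; omega),
    card_insert_of_notMem (by simp; omega), Nat.card_Icc]
  omega

end NewtonianSplit

/-- A poset of type 𝒲 of size `2n − 2` with at most `n − 1` minimal elements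
has exactly `1 + ⌊n/2⌋` isomorphism classes of downsets of size `n`. -/
theorem typeW_dNum (n : ℕ) (P : FinPartOrd.{0}) (hW : TypeW P)
    (hsize : size P = 2 * n - 2)
    (hminel : (Finset.univ.filter fun x : ↥P => ∀ y : ↥P, y ≤ x → y = x).card ≤ n - 1) :
    dNum n P = 1 + n / 2 := by
  obtain ⟨W₁, W₂, hunion, hdisj, hincomp, hconn₁, hconn₂, hnewt₁, hnewt₂, hniso, x, y, hx, hy,
    ⟨ψ⟩⟩ := hW
  have hP : NewtonianSplit P W₁ W₂ := ⟨hunion, hdisj, hincomp, hnewt₁, hnewt₂⟩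
  have hcard : #W₁ = #W₂ := by
    have := card_eq_of_orderIso_subposet ψ
    rw [card_erase_of_mem hx.1, card_erase_of_mem hy.1] at this
    have := card_pos.2 ⟨x, hx.1⟩
    have := card_pos.2 ⟨y, hy.1⟩
    omega
  have hsum : #W₁ + #W₂ = 2 * n - 2 := by
    simpa [size] using (hP.card_inter_add_card_inter univ).trans hsize
  have hxy := hP.heightEl_ne hx hy ψ hniso
  have hx₂ := hP.two_le_heightEl hx hy hconn₁ hcard hxy
  have hy₂ := hP.symm.two_le_heightEl hy hx hconn₂ hcard.symm hxy.symm
  have hlevel : levelCount P W₁ 1 = levelCount P W₂ 1 := by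
    simpa [show heightEl P x ≠ 1 by omega, show heightEl P y ≠ 1 by omega]
      using hP.levelCount_add_eq hx hy ψ 1
  have hmin := hP.card_filter_minimal ▸ hminel
  have := heightEl_le_card hP.isNewtonianDownset_left.1 hx.1
  exact hP.dNum_eq hx hy ψ hxy (by omega) (by omega) hlevel (by omega) (by omega)
end
end

section
/- For every constant c ∈ ℕ there exist n ∈ ℕ, k ∈ ℕ, and a set Γ of k pairwise non-isomorphic posets each of size n, such that Γ has a witness but no witness of Γ has size at most n + k + c. -/
/-!
Formalization framework: finite posets are bundled as `FinPartOrd.{0}`, downsets are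
`Finset`s of elements, unlabelled posets are isomorphism classes (`UPoset`), and a witness
of a set `Γ` of unlabelled posets at size `n` is a finite poset whose set of size-`n`
downsets, up to isomorphism, is exactly `Γ`.
-/

attribute [local instance] Classical.propDecidable

noncomputable section

open Finset

/-!
Take `H = ℓ · C₂ ⊔ Λ_B` with `B = 2ℓ - 2` and `n = 2ℓ`. An `n`-downset of `H` either contains the
top of `Λ_B`, and is then `Λ_B ⊔ A₁`, or consists of `j` full chains and `2ℓ - 2j` isolated
points, so `Γ := D_n(H)` has at most `ℓ + 2` members. In `H` every element lies below at most one
other element, and this passes to every `n`-downset of a witness `Q`. Now `Q` contains a copy of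
`Λ_B`, with top `x`, and a copy of `ℓ · C₂` as downsets. If they met, the bottom `b` of some chain
`b < t` would lie below `x`, and `↓x ∪ {t}` would be an `n`-downset in which `b` lies below the
two elements `x` and `t`. So they are disjoint and `|Q| ≥ (2ℓ - 1) + 2ℓ`, which exceeds
`n + k + c` once `ℓ > c + 3`.
-/

namespace OrderEmbedding

variable {α β γ : Type*} [PartialOrder α] [PartialOrder β]

def inl : α ↪o α ⊕ β :=
  ofMapLEIff Sum.inl fun _ _ => Sum.inl_le_inl_iff

def inr : β ↪o α ⊕ β :=
  ofMapLEIff Sum.inr fun _ _ => Sum.inr_le_inr_iff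

theorem isLowerSet_range_inl : IsLowerSet (Set.range (inl : α ↪o α ⊕ β)) := by
  rintro _ (y | y) hy ⟨a, rfl⟩
  · exact ⟨y, rfl⟩
  · exact absurd hy Sum.not_inr_le_inl

theorem isLowerSet_range_inr : IsLowerSet (Set.range (inr : β ↪o α ⊕ β)) := by
  rintro _ (y | y) hy ⟨a, rfl⟩
  · exact absurd hy Sum.not_inl_le_inr
  · exact ⟨y, rfl⟩

def sumElim [Preorder γ] (f : α ↪o γ) (g : β ↪o γ) (h : ∀ a b, ¬f a ≤ g b ∧ ¬g b ≤ f a) :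
    α ⊕ β ↪o γ :=
  ofMapLEIff (Sum.elim f g) <| by
    rintro (a | b) (a' | b') <;> simp [h]

theorem range_sumElim [Preorder γ] (f : α ↪o γ) (g : β ↪o γ)
    (h : ∀ a b, ¬f a ≤ g b ∧ ¬g b ≤ f a) :
    Set.range (sumElim f g h) = Set.range f ∪ Set.range g :=
  Set.Sum.elim_range f g

def toInitialSeg (f : α ↪o β) (hf : IsLowerSet (Set.range f)) : α ≤i β where
  toRelEmbedding := f.ltEmbedding
  mem_range_of_rel' a _ h := hf h.le ⟨a, rfl⟩

end OrderEmbedding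

theorem InitialSeg.ncard_Iic_apply {α β : Type*} [PartialOrder α] [PartialOrder β] (f : α ≤i β)
    (a : α) : (Set.Iic (f a)).ncard = (Set.Iic a).ncard := by
  rw [← f.coe_toOrderEmbedding, ← f.toOrderEmbedding.image_Iic (by simpa using f.isLowerSet_range),
    Set.ncard_image_of_injective _ f.toOrderEmbedding.injective]

def IoiSubsingleton (α : Type*) [Preorder α] : Prop := ∀ a : α, (Set.Ioi a).Subsingleton

theorem IoiSubsingleton.of_orderEmbedding {α β : Type*} [Preorder α] [PartialOrder β]
    (f : α ↪o β) (h : IoiSubsingleton β) : IoiSubsingleton α :=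
  fun a _ hb _ hc => f.injective (h (f a) (f.strictMono hb) (f.strictMono hc))

theorem IoiSubsingleton.sum {α β : Type*} [PartialOrder α] [PartialOrder β]
    (hα : IoiSubsingleton α) (hβ : IoiSubsingleton β) : IoiSubsingleton (α ⊕ β) := by
  rintro (a | a) (b | b) hb (c | c) hc <;>
    simp only [Set.mem_Ioi, Sum.inl_lt_inl_iff, Sum.inr_lt_inr_iff, Sum.not_inl_lt_inr,
      Sum.not_inr_lt_inl] at hb hc
  · exact congrArg Sum.inl (hα a hb hc)
  · exact congrArg Sum.inr (hβ a hb hc)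

section Downsets

variable {Q : FinPartOrd.{0}}

theorem cls_eq_cls_iff {P R : FinPartOrd.{0}} : cls P = cls R ↔ Nonempty (↥P ≃o ↥R) :=
  Quotient.eq (r := isoSetoid)

theorem isDownset_iff_isLowerSet {D : Finset ↥Q} : IsDownset Q D ↔ IsLowerSet (D : Set ↥Q) :=
  ⟨fun h _ _ hba ha => h ha hba, fun h _ _ ha hba => h hba ha⟩

theorem dSet_finite (n : ℕ) (Q : FinPartOrd.{0}) : (DSet n Q).Finite :=
  (Set.finite_range fun D : Finset ↥Q => cls (subposet Q D)).subset <| by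
    rintro _ ⟨D, -, -, rfl⟩
    exact ⟨D, rfl⟩

theorem usize_of_mem_dSet {n : ℕ} {x : UPoset} (hx : x ∈ DSet n Q) : usize x = n := by
  obtain ⟨D, -, rfl, rfl⟩ := hx
  exact Fintype.card_coe D

theorem card_eq_size_of_cls_subposet_eq {D : Finset ↥Q} {P : FinPartOrd.{0}}
    (h : cls (subposet Q D) = cls P) : D.card = size P :=
  (Fintype.card_coe D).symm.trans (congrArg usize h)

theorem cls_subposet_eq_of_range_eq {M : FinPartOrd.{0}} (f : ↥M ↪o ↥Q) {D : Finset ↥Q}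
    (hD : Set.range f = D) : cls (subposet Q D) = cls M :=
  Quotient.sound ⟨(f.orderIso.trans (OrderIso.setCongr _ _ hD)).symm⟩

theorem cls_mem_dSet_iff {n : ℕ} {P : FinPartOrd.{0}} :
    cls P ∈ DSet n Q ↔ size P = n ∧ Nonempty (↥P ≤i ↥Q) := by
  constructor
  · rintro ⟨D, hD, rfl, hPD⟩
    obtain ⟨e⟩ := cls_eq_cls_iff.mp hPD.symm
    let f : ↥P ↪o ↥Q :=
      e.toOrderEmbedding.trans (OrderEmbedding.subtype (· ∈ D) : ↥(subposet Q D) ↪o ↥Q)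
    refine ⟨(Fintype.card_congr e.toEquiv).trans (Fintype.card_coe D), ⟨f.toInitialSeg ?_⟩⟩
    rintro _ y hy ⟨p, rfl⟩
    exact ⟨e.symm ⟨y, hD (e p).2 hy⟩, congrArg Subtype.val (e.apply_symm_apply _)⟩
  · rintro ⟨rfl, ⟨f⟩⟩
    refine ⟨(Set.range f).toFinset, fun _ _ ha hba => ?_, ?_,
      cls_subposet_eq_of_range_eq f.toOrderEmbedding (by simp)⟩
    · rw [Set.mem_toFinset] at ha ⊢
      exact f.isLowerSet_range hba ha
    · rw [Set.toFinset_card, ← f.coe_toOrderEmbedding,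
        Set.card_range_of_injective f.toOrderEmbedding.injective]
      rfl

end Downsets

namespace AntichainFin

theorem card (m : ℕ) : Fintype.card (AntichainFin m) = m := Fintype.card_fin m

variable {B : ℕ} {a b : WithTop (AntichainFin B)}

theorem withTop_le_iff : a ≤ b ↔ a = b ∨ b = ⊤ := by
  cases b with
  | top => simp
  | coe b =>
    cases a with
    | top => simp
    | coe a => simpa [WithTop.coe_le_coe] using (show a ≤ b ↔ a = b from Iff.rfl)

theorem eq_top_of_lt (h : a < b) : b = ⊤ :=
  (withTop_le_iff.mp h.le).resolve_left h.ne

theorem isMin_of_ne_top (h : a ≠ ⊤) : IsMin a := fun _ hb =>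
  ((withTop_le_iff.mp hb).resolve_right h).ge

theorem card_withTop : Fintype.card (WithTop (AntichainFin B)) = B + 1 :=
  (Fintype.card_option (α := Fin B)).trans (by rw [Fintype.card_fin])

theorem ncard_Iic_top : (Set.Iic (⊤ : WithTop (AntichainFin B))).ncard = B + 1 := by
  rw [Set.Iic_top, Set.ncard_univ, Nat.card_eq_fintype_card, card_withTop]

theorem ioiSubsingleton_withTop : IoiSubsingleton (WithTop (AntichainFin B)) :=
  fun _ _ hb _ hc => (eq_top_of_lt hb).trans (eq_top_of_lt hc).symm

end AntichainFin

namespace Copies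

variable {j k : ℕ} {α : Type}

theorem card [Fintype α] : Fintype.card (Copies k α) = k * Fintype.card α :=
  (Fintype.card_prod _ _).trans (by rw [Fintype.card_fin])

variable [PartialOrder α] {p q : Copies k α}

theorem le_iff : p ≤ q ↔ p.1 = q.1 ∧ p.2 ≤ q.2 := Iff.rfl

theorem lt_iff : p < q ↔ p.1 = q.1 ∧ p.2 < q.2 := by
  simp only [lt_iff_le_not_ge, le_iff]
  grind

def map (g : Fin j ↪ Fin k) : Copies j α ↪o Copies k α :=
  OrderEmbedding.ofMapLEIff (fun p => (g p.1, p.2)) fun _ _ =>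
    and_congr_left' g.injective.eq_iff

theorem ioiSubsingleton (h : IoiSubsingleton α) : IoiSubsingleton (Copies k α) := by
  intro p q hq r hr
  obtain ⟨hq₁, hq₂⟩ := lt_iff.mp hq
  obtain ⟨hr₁, hr₂⟩ := lt_iff.mp hr
  exact Prod.ext (hq₁.symm.trans hr₁) (h p.2 hq₂ hr₂)

theorem ioiSubsingleton_fin_two : IoiSubsingleton (Copies k (Fin 2)) :=
  ioiSubsingleton fun _ b hb c hc => by
    simp only [Set.mem_Ioi, Fin.lt_def] at hb hc
    omega

theorem ncard_Iic_le (p : Copies k (Fin 2)) : (Set.Iic p).ncard ≤ 2 := by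
  let fiber : Fin 2 → Copies k (Fin 2) := fun y => (p.1, y)
  calc (Set.Iic p).ncard ≤ (fiber '' Set.univ).ncard :=
        Set.ncard_le_ncard fun q hq => ⟨q.2, trivial, Prod.ext (le_iff.mp hq).1.symm rfl⟩
    _ ≤ (Set.univ : Set (Fin 2)).ncard := Set.ncard_image_le Set.finite_univ
    _ = 2 := by rw [Set.ncard_univ, Nat.card_fin]

theorem snd_eq_zero_of_isMin {p : Copies k (Fin 2)} (h : IsMin p) : p.2 = 0 := by
  have hle : (show Copies k (Fin 2) from (p.1, 0)) ≤ p := le_iff.mpr ⟨rfl, Fin.zero_le _⟩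
  exact Fin.le_zero_iff.mp (le_iff.mp (h hle)).2

end Copies

section LowerBound

variable {Q : Type*} [PartialOrder Q] {B ℓ : ℕ}

theorem isMin_of_lt_apply_top (φ : WithTop (AntichainFin B) ≤i Q) {y : Q} (hy : y < φ ⊤) :
    IsMin y := by
  obtain ⟨a, ha, rfl⟩ := φ.lt_apply_iff.mp hy
  exact φ.map_isMin (AntichainFin.isMin_of_ne_top ha.ne)

theorem apply_top_notMem_range (φ : WithTop (AntichainFin B) ≤i Q) (ψ : Copies ℓ (Fin 2) ≤i Q)
    (hB : 2 ≤ B) : φ ⊤ ∉ Set.range ψ := by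
  rintro ⟨p, hp⟩
  have h := ψ.ncard_Iic_apply p
  rw [hp, φ.ncard_Iic_apply, AntichainFin.ncard_Iic_top] at h
  have := Copies.ncard_Iic_le p
  omega

variable [Finite Q]

theorem disjoint_range_of_ioiSubsingleton (φ : WithTop (AntichainFin B) ≤i Q)
    (ψ : Copies ℓ (Fin 2) ≤i Q) (hB : 2 ≤ B)
    (hQ : ∀ S : Set Q, IsLowerSet S → S.ncard = B + 2 → IoiSubsingleton S) :
    Disjoint (Set.range φ) (Set.range ψ) := by
  rw [Set.disjoint_left]
  rintro _ ⟨a, rfl⟩ ⟨p, hp⟩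
  obtain rfl | ha := eq_or_ne a ⊤
  · exact apply_top_notMem_range φ ψ hB ⟨p, hp⟩
  set x := φ ⊤
  set t := ψ (show Copies ℓ (Fin 2) from (p.1, 1))
  have hbx : ψ p < x := hp ▸ φ.strictMono (lt_top_iff_ne_top.mpr ha)
  have hp₂ : p.2 = 0 :=
    Copies.snd_eq_zero_of_isMin (ψ.isMin_apply_iff.mp (isMin_of_lt_apply_top φ hbx))
  have hbt : ψ p < t := ψ.strictMono (Copies.lt_iff.mpr ⟨rfl, by rw [hp₂]; exact zero_lt_one⟩)
  have htx : t ∉ Set.Iic x := fun htx => by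
    obtain htx | htx := htx.eq_or_lt
    · exact apply_top_notMem_range φ ψ hB ⟨_, htx⟩
    · exact (isMin_of_lt_apply_top φ htx).not_lt hbt
  set S := insert t (Set.Iic x)
  have hS : IsLowerSet S := by
    rintro y z hzy (rfl | hy)
    · obtain rfl | hzy := hzy.eq_or_lt
      · exact Set.mem_insert _ _
      obtain ⟨q, hq, rfl⟩ := ψ.lt_apply_iff.mp hzy
      obtain ⟨hq₁, hq₂⟩ := Copies.lt_iff.mp hq
      have : q = p := Prod.ext hq₁ (by rw [hp₂]; omega)
      exact Set.mem_insert_of_mem _ (this ▸ hbx.le)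
    · exact Set.mem_insert_of_mem _ (hzy.trans hy)
  have hcard : S.ncard = B + 2 := by
    rw [Set.ncard_insert_of_notMem htx, φ.ncard_Iic_apply, AntichainFin.ncard_Iic_top]
  have hxt := hQ S hS hcard ⟨ψ p, Set.mem_insert_of_mem _ hbx.le⟩
    (Subtype.mk_lt_mk.mpr hbx : _ < (⟨x, Set.mem_insert_of_mem _ le_rfl⟩ : S))
    (Subtype.mk_lt_mk.mpr hbt : _ < (⟨t, Set.mem_insert _ _⟩ : S))
  exact htx (le_of_eq (congrArg Subtype.val hxt).symm)

theorem card_le_of_ioiSubsingleton (φ : WithTop (AntichainFin B) ≤i Q)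
    (ψ : Copies ℓ (Fin 2) ≤i Q) (hB : 2 ≤ B)
    (hQ : ∀ S : Set Q, IsLowerSet S → S.ncard = B + 2 → IoiSubsingleton S) :
    B + 1 + 2 * ℓ ≤ Nat.card Q := by
  calc B + 1 + 2 * ℓ = (Set.range φ).ncard + (Set.range ψ).ncard := by
        rw [← φ.coe_toOrderEmbedding, ← ψ.coe_toOrderEmbedding,
          Set.ncard_range_of_injective φ.toOrderEmbedding.injective,
          Set.ncard_range_of_injective ψ.toOrderEmbedding.injective, Nat.card_eq_fintype_card,
          Nat.card_eq_fintype_card, Copies.card, Fintype.card_fin, ← AntichainFin.ncard_Iic_top,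
          Set.Iic_top, Set.ncard_univ, Nat.card_eq_fintype_card]
        ring
    _ = (Set.range φ ∪ Set.range ψ).ncard :=
        (Set.ncard_union_eq (disjoint_range_of_ioiSubsingleton φ ψ hB hQ)).symm
    _ ≤ Nat.card Q := Set.ncard_le_card _

end LowerBound

def IsIsolatedIn {α : Type*} [LE α] (D : Finset α) (z : α) : Prop :=
  ∀ w ∈ D, z ≤ w ∨ w ≤ z → w = z

theorem exists_cls_subposet_eq_sum_antichainFin {Q : FinPartOrd.{0}} {M : Type} [PartialOrder M]
    [Fintype M] (e : M ↪o ↥Q) {D : Finset ↥Q} (hsub : Set.range e ⊆ D)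
    (hiso : ∀ z ∈ D, z ∉ Set.range e → IsIsolatedIn D z) :
    ∃ m, cls (subposet Q D) = cls (FinPartOrd.of (M ⊕ AntichainFin m)) := by
  set F := D.filter (· ∉ Set.range e)
  have hF : ∀ k, (F.equivFin.symm k).1 ∈ D ∧ (F.equivFin.symm k).1 ∉ Set.range e := fun k =>
    Finset.mem_filter.mp (F.equivFin.symm k).2
  let s : AntichainFin F.card ↪o ↥Q :=
    OrderEmbedding.ofMapLEIff (fun k => (F.equivFin.symm k).1) fun k k' =>
      ⟨fun h => F.equivFin.symm.injective (Subtype.ext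
        (hiso _ (hF k).1 (hF k).2 _ (hF k').1 (Or.inl h)).symm), fun h => h ▸ le_rfl⟩
  have hincomp : ∀ a k, ¬e a ≤ s k ∧ ¬s k ≤ e a := fun a k =>
    have hne := fun h : s k = e a => (hF k).2 ⟨a, h.symm⟩
    ⟨fun h => hne (hiso _ (hF k).1 (hF k).2 _ (hsub ⟨a, rfl⟩) (Or.inr h)).symm,
      fun h => hne (hiso _ (hF k).1 (hF k).2 _ (hsub ⟨a, rfl⟩) (Or.inl h)).symm⟩
  refine ⟨F.card, cls_subposet_eq_of_range_eq (OrderEmbedding.sumElim e s hincomp) ?_⟩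
  rw [OrderEmbedding.range_sumElim]
  ext z
  refine ⟨?_, fun hz => ?_⟩
  · rintro (hz | ⟨k, rfl⟩)
    exacts [hsub hz, (hF k).1]
  · by_cases hze : z ∈ Set.range e
    · exact Or.inl hze
    · refine Or.inr ⟨F.equivFin ⟨z, Finset.mem_filter.mpr ⟨hz, hze⟩⟩, ?_⟩
      simp [s]

abbrev chainsLambda (ℓ B : ℕ) : FinPartOrd.{0} :=
  FinPartOrd.of (Copies ℓ (Fin 2) ⊕ WithTop (AntichainFin B))

abbrev lambdaSumPoint (B : ℕ) : FinPartOrd.{0} :=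
  FinPartOrd.of (WithTop (AntichainFin B) ⊕ AntichainFin 1)

section ChainsLambda

variable {ℓ B : ℕ} {D : Finset ↥(chainsLambda ℓ B)}

theorem ioiSubsingleton_chainsLambda : IoiSubsingleton (chainsLambda ℓ B) :=
  Copies.ioiSubsingleton_fin_two.sum AntichainFin.ioiSubsingleton_withTop

theorem cls_subposet_chainsLambda_of_top_mem (hD : IsDownset _ D) (hcard : D.card = B + 2)
    (htop : Sum.inr ⊤ ∈ D) : cls (subposet _ D) = cls (lambdaSumPoint B) := by
  have hsub : Set.range (OrderEmbedding.inr : _ ↪o ↥(chainsLambda ℓ B)) ⊆ (D : Set _) := by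
    rintro _ ⟨a, rfl⟩
    exact hD htop (Sum.inr_le_inr_iff.mpr le_top)
  -- `D` has room for only one element outside the `Λ_B` component
  have hiso : ∀ z ∈ D, z ∉ Set.range (OrderEmbedding.inr : _ ↪o ↥(chainsLambda ℓ B)) →
      IsIsolatedIn D z := by
    rintro (p | a) hz hzr w hw hzw
    · obtain ⟨q, rfl⟩ : ∃ q, w = Sum.inl q := by
        rcases w with q | b
        · exact ⟨q, rfl⟩
        · simp at hzw
      by_contra hne
      have hle := Finset.card_le_card (s := insert (Sum.inl p) (insert (Sum.inl q)
          (Finset.univ.map Function.Embedding.inr))) (t := D) <| by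
        refine Finset.insert_subset hz (Finset.insert_subset hw fun _ h => hsub ?_)
        obtain ⟨a, -, rfl⟩ := Finset.mem_map.mp h
        exact ⟨a, rfl⟩
      rw [Finset.card_insert_of_notMem (by simp [Ne.symm hne]), Finset.card_insert_of_notMem
        (by simp), Finset.card_map, Finset.card_univ, AntichainFin.card_withTop] at hle
      omega
    · exact absurd ⟨a, rfl⟩ hzr
  obtain ⟨m, hm⟩ := exists_cls_subposet_eq_sum_antichainFin (Q := chainsLambda ℓ B)
    OrderEmbedding.inr hsub hiso
  have hsize := card_eq_size_of_cls_subposet_eq hm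
  rw [size, Fintype.card_sum, AntichainFin.card_withTop, AntichainFin.card] at hsize
  obtain rfl : m = 1 := by omega
  exact hm

theorem isIsolatedIn_inl {p : Copies ℓ (Fin 2)} (hp : Sum.inl p ∈ D)
    (hp₁ : (Sum.inl (p.1, 1) : ↥(chainsLambda ℓ B)) ∉ D) : IsIsolatedIn D (Sum.inl p) := by
  have hbot : ∀ q : Copies ℓ (Fin 2), q.1 = p.1 → Sum.inl q ∈ D → q.2 = 0 := by
    intro q hq hqD
    by_contra hq₂
    obtain rfl : q = (p.1, 1) := Prod.ext hq (show q.2 = 1 by omega)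
    exact hp₁ hqD
  rintro (q | b) hq hpq
  · simp only [Sum.inl_le_inl_iff, Copies.le_iff] at hpq
    have hq₁ : q.1 = p.1 := hpq.elim (fun h => h.1.symm) fun h => h.1
    exact congrArg Sum.inl (Prod.ext hq₁ ((hbot q hq₁ hq).trans (hbot p rfl hp).symm))
  · simp at hpq

theorem isIsolatedIn_inr {a : WithTop (AntichainFin B)} (ha : Sum.inr a ∈ D)
    (htop : Sum.inr ⊤ ∉ D) : IsIsolatedIn D (Sum.inr a) := by
  rintro (q | b) hb hab
  · simp at hab
  simp only [Sum.inr_le_inr_iff] at hab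
  rcases hab with h | h
  · exact congrArg Sum.inr
      ((AntichainFin.withTop_le_iff.mp h).resolve_right fun h => htop (h ▸ hb)).symm
  · exact congrArg Sum.inr
      ((AntichainFin.withTop_le_iff.mp h).resolve_right fun h => htop (h ▸ ha))

theorem exists_cls_subposet_chainsLambda_of_top_notMem (hD : IsDownset _ D)
    (htop : Sum.inr ⊤ ∉ D) : ∃ j ≤ ℓ, ∃ m,
      cls (subposet _ D) = cls (FinPartOrd.of (Copies j (Fin 2) ⊕ AntichainFin m)) := by
  set full := Finset.univ.filter fun i : Fin ℓ => (Sum.inl (i, 1) : ↥(chainsLambda ℓ B)) ∈ D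
  let e : Copies full.card (Fin 2) ↪o ↥(chainsLambda ℓ B) :=
    (Copies.map (full.orderEmbOfFin rfl).toEmbedding).trans OrderEmbedding.inl
  have he : ∀ z, z ∈ Set.range e ↔ ∃ p : Copies ℓ (Fin 2), p.1 ∈ full ∧ z = Sum.inl p := by
    refine fun z => ⟨?_, ?_⟩
    · rintro ⟨q, rfl⟩
      exact ⟨_, full.orderEmbOfFin_mem rfl q.1, rfl⟩
    · rintro ⟨p, hp, rfl⟩
      obtain ⟨k, hk⟩ : p.1 ∈ Set.range (full.orderEmbOfFin rfl) := by
        rwa [Finset.range_orderEmbOfFin]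
      exact ⟨(k, p.2), congrArg Sum.inl (Prod.ext hk rfl)⟩
  have hsub : Set.range e ⊆ (D : Set _) := by
    intro z hz
    obtain ⟨p, hp, rfl⟩ := (he z).mp hz
    exact hD (Finset.mem_filter.mp hp).2
      (Sum.inl_le_inl_iff.mpr (Copies.le_iff.mpr ⟨rfl, Fin.le_last _⟩))
  have hiso : ∀ z ∈ D, z ∉ Set.range e → IsIsolatedIn D z := by
    rintro (p | a) hz hzr
    · refine isIsolatedIn_inl hz fun hp => hzr ((he _).mpr ⟨p, ?_, rfl⟩)
      exact Finset.mem_filter.mpr ⟨Finset.mem_univ _, hp⟩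
    · exact isIsolatedIn_inr hz htop
  exact ⟨full.card, full.card_le_univ.trans_eq (Fintype.card_fin ℓ),
    exists_cls_subposet_eq_sum_antichainFin (Q := chainsLambda ℓ B) e hsub hiso⟩

theorem dSet_chainsLambda_subset :
    DSet (B + 2) (chainsLambda ℓ B) ⊆ insert (cls (lambdaSumPoint B))
      (Set.range fun j : Fin (ℓ + 1) =>
        cls (FinPartOrd.of (Copies j (Fin 2) ⊕ AntichainFin (B + 2 - 2 * j)))) := by
  rintro _ ⟨D, hD, hcard, rfl⟩
  by_cases htop : Sum.inr ⊤ ∈ D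
  · exact Or.inl (cls_subposet_chainsLambda_of_top_mem hD hcard htop)
  obtain ⟨j, hj, m, hm⟩ := exists_cls_subposet_chainsLambda_of_top_notMem hD htop
  have hsize := card_eq_size_of_cls_subposet_eq hm
  rw [size, Fintype.card_sum, Copies.card, AntichainFin.card, Fintype.card_fin] at hsize
  obtain rfl : m = B + 2 - 2 * j := by omega
  exact Or.inr ⟨⟨j, Nat.lt_succ_of_le hj⟩, hm.symm⟩

theorem ncard_dSet_chainsLambda_le : (DSet (B + 2) (chainsLambda ℓ B)).ncard ≤ ℓ + 2 := by
  refine (Set.ncard_le_ncard dSet_chainsLambda_subset (Set.toFinite _)).trans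
    ((Set.ncard_insert_le _ _).trans (Nat.succ_le_succ ?_))
  rw [← Set.image_univ]
  exact (Set.ncard_image_le Set.finite_univ).trans_eq (by rw [Set.ncard_univ, Nat.card_fin])

theorem cls_lambdaSumPoint_mem_dSet (hℓ : 0 < ℓ) :
    cls (lambdaSumPoint B) ∈ DSet (B + 2) (chainsLambda ℓ B) := by
  let z : ↥(chainsLambda ℓ B) := Sum.inl (⟨0, hℓ⟩, 0)
  let point : AntichainFin 1 ↪o ↥(chainsLambda ℓ B) :=
    OrderEmbedding.ofMapLEIff (fun _ => z) fun a b =>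
      ⟨fun _ => Subsingleton.elim (α := Fin 1) a b, fun _ => le_rfl⟩
  have hz : IsLowerSet (Set.range point) := by
    rintro _ (q | b) hq ⟨k, rfl⟩
    · obtain ⟨hq₁, hq₂⟩ := Copies.le_iff.mp (Sum.inl_le_inl_iff.mp hq)
      exact ⟨k, congrArg Sum.inl (Prod.ext hq₁.symm (Fin.le_zero_iff.mp hq₂).symm)⟩
    · exact absurd hq Sum.not_inr_le_inl
  let f := OrderEmbedding.sumElim OrderEmbedding.inr point fun _ _ =>
    ⟨Sum.not_inr_le_inl, Sum.not_inl_le_inr⟩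
  refine cls_mem_dSet_iff.mpr ⟨?_, ⟨f.toInitialSeg ?_⟩⟩
  · rw [size, Fintype.card_sum, AntichainFin.card_withTop, AntichainFin.card]
  · rw [OrderEmbedding.range_sumElim]
    exact OrderEmbedding.isLowerSet_range_inr.union hz

theorem cls_copies_mem_dSet (h : B + 2 = 2 * ℓ) :
    cls (FinPartOrd.of (Copies ℓ (Fin 2))) ∈ DSet (B + 2) (chainsLambda ℓ B) := by
  refine cls_mem_dSet_iff.mpr ⟨?_, ⟨OrderEmbedding.inl.toInitialSeg
    OrderEmbedding.isLowerSet_range_inl⟩⟩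
  rw [size, Copies.card, Fintype.card_fin, h, mul_comm]

end ChainsLambda

theorem ioiSubsingleton_of_dSet_subset {n : ℕ} {Q R : FinPartOrd.{0}} (hR : IoiSubsingleton R)
    (h : DSet n Q ⊆ DSet n R) (S : Set ↥Q) (hS : IsLowerSet S) (hcard : S.ncard = n) :
    IoiSubsingleton S := by
  obtain ⟨D, -, -, hD⟩ := h ⟨S.toFinset, isDownset_iff_isLowerSet.mpr (by simpa using hS),
    by rw [← hcard, Set.ncard_eq_toFinset_card'], rfl⟩
  obtain ⟨e⟩ := cls_eq_cls_iff.mp hD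
  have hRD : IoiSubsingleton (subposet R D) :=
    hR.of_orderEmbedding (OrderEmbedding.subtype (· ∈ D) : ↥(subposet R D) ↪o ↥R)
  exact (hRD.of_orderEmbedding e.symm.toOrderEmbedding).of_orderEmbedding
    (OrderIso.setCongr S (S.toFinset : Set ↥Q) (Set.coe_toFinset S).symm).toOrderEmbedding

/-- For every constant `c` there exist `n`, `k` and a set `Γ` of `k`
pairwise non-isomorphic posets of size `n` such that `Γ` has a witness, but no witness of
`Γ` has size at most `n + k + c`. -/
theorem no_linear_witness_bound (c : ℕ) :
    ∃ (n k : ℕ) (Γ : Set UPoset), Γ.Finite ∧ Γ.ncard = k ∧ (∀ x ∈ Γ, usize x = n) ∧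
      (∃ Q : FinPartOrd.{0}, IsWitness n Γ Q) ∧
      ∀ Q : FinPartOrd.{0}, IsWitness n Γ Q → n + k + c < size Q := by
  refine ⟨2 * c + 6 + 2, _, DSet (2 * c + 6 + 2) (chainsLambda (c + 4) (2 * c + 6)),
    dSet_finite _ _, rfl, fun _ => usize_of_mem_dSet, ⟨_, rfl⟩, fun Q hQ => ?_⟩
  have hφ := cls_lambdaSumPoint_mem_dSet (ℓ := c + 4) (B := 2 * c + 6) (by omega)
  have hψ := cls_copies_mem_dSet (ℓ := c + 4) (B := 2 * c + 6) (by omega)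
  rw [← hQ] at hφ hψ
  obtain ⟨-, ⟨φ⟩⟩ := cls_mem_dSet_iff.mp hφ
  obtain ⟨-, ⟨ψ⟩⟩ := cls_mem_dSet_iff.mp hψ
  have hsize := card_le_of_ioiSubsingleton
    ((OrderEmbedding.inl.toInitialSeg OrderEmbedding.isLowerSet_range_inl).trans φ) ψ (by omega)
    (ioiSubsingleton_of_dSet_subset ioiSubsingleton_chainsLambda hQ.le)
  have hk := ncard_dSet_chainsLambda_le (ℓ := c + 4) (B := 2 * c + 6)
  rw [size, ← Nat.card_eq_fintype_card]
  omega
end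
end

section
/- Let P_0 and R_0 be non-isomorphic posets, each of size m, and let i ≥ 1. Then no witness to D_{m+i+1}(P_iR_i) has size less than |P_iR_i| = 2m + 2i. -/
/-!
Formalization framework: finite posets are bundled as `FinPartOrd.{0}`, downsets are
`Finset`s of elements, unlabelled posets are isomorphism classes (`UPoset`), and a witness
of a set `Γ` of unlabelled posets at size `n` is a finite poset whose set of size-`n`
downsets, up to isomorphism, is exactly `Γ`.
-/

attribute [local instance] Classical.propDecidable

noncomputable section

open Finset

/-!
`P_i` together with the bottom of `R_i` is a downset of `P_iR_i` of size `m + i + 1`, and so is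
`R_i` together with the bottom of `P_i`. Hence a witness `Q` contains downsets `A ≅ P_i` and
`B ≅ R_i`, each with a least element. If `A = B`, then `P_i ≅ R_i`, and comparing the numbers of
elements below each point shows that such an isomorphism maps the chain onto the chain, so
`P₀ ≅ R₀`. If `A` and `B` overlap without being equal, adding to `A` a minimal element of `B \ A`
gives a downset of size `m + i + 1` that is connected, whereas every downset of `P_iR_i` of that
size meets both of its components. So `A` and `B` are disjoint and `|Q| ≥ 2m + 2i`.
-/

theorem Sum.isMin_inl {α β : Type*} [LE α] [LE β] {a : α} (h : IsMin a) :
    IsMin (Sum.inl a : α ⊕ β) := by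
  rintro (b | b) hb
  · exact Sum.inl_le_inl_iff.2 (h (Sum.inl_le_inl_iff.1 hb))
  · exact absurd hb Sum.not_inr_le_inl

theorem Sum.isMin_inr {α β : Type*} [LE α] [LE β] {b : β} (h : IsMin b) :
    IsMin (Sum.inr b : α ⊕ β) := by
  rintro (a | a) ha
  · exact absurd ha Sum.not_inl_le_inr
  · exact Sum.inr_le_inr_iff.2 (h (Sum.inr_le_inr_iff.1 ha))

theorem Sum.isLeft_eq_of_monotone {E α β : Type*} [Preorder E] [Preorder α] [Preorder β]
    {f : E → α ⊕ β} (hf : Monotone f) {μ : E}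
    (hμ : ∀ x, ∃ y, μ ≤ y ∧ Relation.SymmGen (· ≤ ·) x y) (x : E) :
    (f x).isLeft = (f μ).isLeft := by
  have hcomp {a b : E} (h : Relation.SymmGen (· ≤ ·) a b) : (f a).isLeft = (f b).isLeft :=
    h.elim (fun h => Bool.eq_iff_iff.2 (Sum.LiftRel.isLeft_congr (hf h)))
      (fun h => (Bool.eq_iff_iff.2 (Sum.LiftRel.isLeft_congr (hf h))).symm)
  obtain ⟨y, hμy, hxy⟩ := hμ x
  exact (hcomp hxy).trans (hcomp (.of_le hμy)).symm

theorem Finset.card_le_of_forall_isLeft_eq {α β : Type*} [Fintype α] [Fintype β]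
    (D : Finset (α ⊕ β)) (b : Bool) (h : ∀ x ∈ D, x.isLeft = b) :
    D.card ≤ max (Fintype.card α) (Fintype.card β) := by
  rw [← D.card_toLeft_add_card_toRight]
  cases b
  · have : D.toLeft = ∅ := by
      ext a; simpa using h (.inl a)
    rw [this, Finset.card_empty, zero_add]
    exact (Finset.card_le_univ _).trans (le_max_right _ _)
  · have : D.toRight = ∅ := by
      ext a; simpa using h (.inr a)
    rw [this, Finset.card_empty, add_zero]
    exact (Finset.card_le_univ _).trans (le_max_left _ _)

namespace Sum.Lex

variable {α γ δ : Type*} [PartialOrder α] [Fintype α] [Preorder γ] [Preorder δ]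

theorem exists_orderIso_apply_inr (f : α ⊕ₗ γ ≃o α ⊕ₗ δ) (p : γ) :
    ∃ q, f (toLex (inr p)) = toLex (inr q) := by
  rcases hfp : ofLex (f (toLex (inr p))) with a | q
  · exfalso
    set ι : α ↪ α ⊕ₗ γ := Function.Embedding.inl.trans toLex.toEmbedding
    set κ : α ↪ α ⊕ₗ δ := Function.Embedding.inl.trans toLex.toEmbedding
    -- `f` would embed the `card α + 1` elements below `inr p` into the `card α` ones below `inl a`
    have hsub : (insert (toLex (inr p)) (Finset.univ.map ι)).map f.toEquiv.toEmbedding ⊆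
        Finset.univ.map κ := by
      intro y hy
      obtain ⟨x, hx, rfl⟩ := Finset.mem_map.1 hy
      have hxp : x ≤ toLex (inr p) := by
        rcases Finset.mem_insert.1 hx with rfl | hx
        · exact le_rfl
        · obtain ⟨b, -, rfl⟩ := Finset.mem_map.1 hx
          exact inl_le_inr _ _
      have hfx : f x ≤ toLex (inl a) := (congrArg toLex hfp) ▸ f.monotone hxp
      rcases hy : ofLex (f x) with b | r
      · exact Finset.mem_map.2 ⟨b, Finset.mem_univ _, (congrArg toLex hy).symm⟩
      · exact absurd ((congrArg toLex hy).symm.trans_le hfx) not_inr_le_inl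
    have hcard := Finset.card_le_card hsub
    rw [Finset.card_map, Finset.card_insert_of_notMem (by simp [ι]), Finset.card_map,
      Finset.card_map] at hcard
    omega
  · exact ⟨q, congrArg toLex hfp⟩

theorem nonempty_orderIso_of_orderIso (f : α ⊕ₗ γ ≃o α ⊕ₗ δ) : Nonempty (γ ≃o δ) := by
  choose g hg using exists_orderIso_apply_inr f
  choose h hh using exists_orderIso_apply_inr f.symm
  have hgh : ∀ q, g (h q) = q := fun q => by
    simpa [← hh q] using (hg (h q)).symm
  have hhg : ∀ p, h (g p) = p := fun p => by
    simpa [← hg p] using (hh (g p)).symm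
  refine ⟨⟨⟨g, h, hhg, hgh⟩, fun {a b} => ?_⟩⟩
  change g a ≤ g b ↔ a ≤ b
  rw [← inr_le_inr_iff (α := α), ← hg, ← hg, f.le_iff_le, inr_le_inr_iff]

end Sum.Lex

def OrderEmbedding.orderIsoOfRangeEq {α β γ : Type*} [Preorder α] [Preorder β]
    [Preorder γ] (f : α ↪o γ) (g : β ↪o γ) (h : Set.range f = Set.range g) : α ≃o β :=
  f.orderIso.trans ((OrderIso.setCongr _ _ h).trans g.orderIso.symm)

namespace InitialSeg

variable (α β : Type*) [Preorder α] [Preorder β]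

def inl : α ≤i α ⊕ β where
  toFun := Sum.inl
  inj' := Sum.inl_injective
  map_rel_iff' := Sum.inl_lt_inl_iff
  mem_range_of_rel' _ b h := by
    cases b with
    | inl b => exact ⟨b, rfl⟩
    | inr b => exact absurd h Sum.not_inr_lt_inl

def inr : β ≤i α ⊕ β where
  toFun := Sum.inr
  inj' := Sum.inr_injective
  map_rel_iff' := Sum.inr_lt_inr_iff
  mem_range_of_rel' _ b h := by
    cases b with
    | inl b => exact absurd h Sum.not_inl_lt_inr
    | inr b => exact ⟨b, rfl⟩

end InitialSeg

section Downsets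

variable {Q Q' : FinPartOrd.{0}} {X Y : Type} [PartialOrder X] [PartialOrder Y]

def IsDownset.initialSeg {A : Finset ↥Q} (hA : IsDownset Q A) : ↥(subposet Q A) ≤i ↥Q where
  toFun := Subtype.val
  inj' := Subtype.val_injective
  map_rel_iff' := Iff.rfl
  mem_range_of_rel' x b h := ⟨⟨b, hA x.2 h.le⟩, rfl⟩

theorem IsDownset.insert_of_minimal {A B : Finset ↥Q} (hA : IsDownset Q A) (hB : IsDownset Q B)
    {z : ↥Q} (hz : Minimal (· ∈ B \ A) z) : IsDownset Q (insert z A) := by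
  intro a b ha hba
  rcases Finset.mem_insert.1 ha with rfl | ha
  · by_cases hbA : b ∈ A
    · exact Finset.mem_insert_of_mem hbA
    · have hb : b ∈ B \ A := Finset.mem_sdiff.2 ⟨hB (Finset.mem_sdiff.1 hz.1).1 hba, hbA⟩
      exact le_antisymm hba (hz.2 hb hba) ▸ Finset.mem_insert_self _ _
  · exact Finset.mem_insert_of_mem (hA ha hba)

theorem exists_isDownset_card_add_one_of_not_disjoint {A B : Finset ↥Q} (hA : IsDownset Q A)
    (hB : IsDownset Q B) (hcard : A.card = B.card) (hne : A ≠ B) (hmeet : ¬Disjoint A B)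
    {μ ν : ↥Q} (hμ : IsLeast ↑A μ) (hν : IsLeast ↑B ν) :
    ∃ E : Finset ↥Q, IsDownset Q E ∧ E.card = A.card + 1 ∧
      ∃ c : ↥(subposet Q E), ∀ x, ∃ y, c ≤ y ∧ Relation.SymmGen (· ≤ ·) x y := by
  have hBA : (B \ A).Nonempty := Finset.sdiff_nonempty.2 fun hsub =>
    hne (Finset.eq_of_subset_of_card_le hsub hcard.le).symm
  obtain ⟨z, hz⟩ := Finset.exists_minimal hBA
  obtain ⟨hzB, hzA⟩ := Finset.mem_sdiff.1 hz.1
  obtain ⟨w, hwA, hwB⟩ := Finset.not_disjoint_iff.1 hmeet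
  refine ⟨insert z A, hA.insert_of_minimal hB hz, Finset.card_insert_of_notMem hzA,
    ⟨μ, Finset.mem_insert_of_mem hμ.1⟩, ?_⟩
  rintro ⟨x, hxE⟩
  rcases Finset.mem_insert.1 hxE with rfl | hx
  · by_cases hνA : ν ∈ A
    · exact ⟨⟨x, hxE⟩, (hμ.2 hνA).trans (hν.2 hzB), .refl _ _⟩
    · -- then `ν = x`, which lies below the common element `w`
      have hνx : ν = x :=
        le_antisymm (hν.2 hzB) (hz.2 (Finset.mem_sdiff.2 ⟨hν.1, hνA⟩) (hν.2 hzB))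
      exact ⟨⟨w, Finset.mem_insert_of_mem hwA⟩, hμ.2 hwA, .of_le (hνx ▸ hν.2 hwB :)⟩
  · exact ⟨⟨x, hxE⟩, hμ.2 hx, .refl _ _⟩

namespace InitialSeg

variable [Fintype X] [Fintype Y]

theorem isDownset_image (f : X ≤i ↥Q) : IsDownset Q (Finset.univ.image f) := by
  intro a b ha hba
  obtain ⟨x, -, rfl⟩ := Finset.mem_image.1 ha
  obtain ⟨y, rfl⟩ := f.mem_range_of_le hba
  exact Finset.mem_image_of_mem _ (Finset.mem_univ y)

theorem card_image (f : X ≤i ↥Q) : (Finset.univ.image f).card = Fintype.card X := by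
  rw [Finset.card_image_of_injective _ (EmbeddingLike.injective f), Finset.card_univ]

theorem isLeast_image (f : X ≤i ↥Q) {μ : X} (hμ : ∀ x, μ ≤ x) :
    IsLeast ↑(Finset.univ.image f) (f μ) := by
  refine ⟨by simp, fun a ha => ?_⟩
  obtain ⟨x, -, rfl⟩ := Finset.mem_image.1 (Finset.mem_coe.1 ha)
  exact f.monotone (hμ x)

theorem exists_isDownset_card_add_one (f : X ≤i ↥Q) {b : ↥Q} (hb : IsMin b)
    (hbf : b ∉ Set.range f) :
    ∃ D : Finset ↥Q, IsDownset Q D ∧ D.card = Fintype.card X + 1 ∧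
      Nonempty (X ≤i ↥(subposet Q D)) := by
  have hbD : b ∉ Finset.univ.image f := by simpa using hbf
  refine ⟨insert b (Finset.univ.image f), ?_, by rw [Finset.card_insert_of_notMem hbD,
    f.card_image], ⟨f.codRestrict _ fun x => ?_⟩⟩
  · intro a c ha hca
    rcases Finset.mem_insert.1 ha with rfl | ha
    · exact hb.eq_of_le hca ▸ Finset.mem_insert_self _ _
    · exact Finset.mem_insert_of_mem (f.isDownset_image ha hca)
  · exact Finset.mem_insert_of_mem (Finset.mem_image_of_mem _ (Finset.mem_univ x))

theorem nonempty_orderIso_or_card_add_le_or_exists_isDownset (f : X ≤i ↥Q) (g : Y ≤i ↥Q)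
    (hXY : Fintype.card X = Fintype.card Y) {μ : X} (hμ : ∀ x, μ ≤ x) {ν : Y}
    (hν : ∀ y, ν ≤ y) :
    Nonempty (X ≃o Y) ∨ Fintype.card X + Fintype.card Y ≤ size Q ∨
      ∃ E : Finset ↥Q, IsDownset Q E ∧ E.card = Fintype.card X + 1 ∧
        ∃ c : ↥(subposet Q E), ∀ x, ∃ y, c ≤ y ∧ Relation.SymmGen (· ≤ ·) x y := by
  by_cases hdisj : Disjoint (Finset.univ.image f) (Finset.univ.image g)
  · refine Or.inr (Or.inl ?_)
    rw [← f.card_image, ← g.card_image, ← Finset.card_union_of_disjoint hdisj]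
    exact Finset.card_le_univ _
  by_cases hAB : Finset.univ.image f = Finset.univ.image g
  · have hrange : Set.range f = Set.range g := by
      simpa [Finset.coe_image] using congrArg (↑· : Finset ↥Q → Set ↥Q) hAB
    exact Or.inl ⟨f.toOrderEmbedding.orderIsoOfRangeEq g.toOrderEmbedding hrange⟩
  refine Or.inr (Or.inr ?_)
  rw [← f.card_image]
  exact exists_isDownset_card_add_one_of_not_disjoint f.isDownset_image g.isDownset_image
    (by rw [f.card_image, g.card_image, hXY]) hAB hdisj (f.isLeast_image hμ) (g.isLeast_image hν)

end InitialSeg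

theorem exists_orderIso_of_DSet_eq {n : ℕ} (h : DSet n Q = DSet n Q') {D : Finset ↥Q}
    (hD : IsDownset Q D) (hcard : D.card = n) :
    ∃ D' : Finset ↥Q', IsDownset Q' D' ∧ D'.card = n ∧
      Nonempty (↥(subposet Q D) ≃o ↥(subposet Q' D')) := by
  obtain ⟨D', hD', hcard', hcls⟩ : cls (subposet Q D) ∈ DSet n Q' := h ▸ ⟨D, hD, hcard, rfl⟩
  exact ⟨D', hD', hcard', Quotient.exact hcls.symm⟩

theorem nonempty_initialSeg_of_DSet_eq [Fintype X] {n : ℕ} (h : DSet n Q = DSet n Q')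
    (f : X ≤i ↥Q') {b : ↥Q'} (hb : IsMin b) (hbf : b ∉ Set.range f)
    (hn : Fintype.card X + 1 = n) : Nonempty (X ≤i ↥Q) := by
  obtain ⟨D, hD, hDcard, ⟨φ⟩⟩ := f.exists_isDownset_card_add_one hb hbf
  obtain ⟨A, hA, -, ⟨e⟩⟩ := exists_orderIso_of_DSet_eq h.symm hD (hDcard.trans hn)
  exact ⟨φ.trans (e.toInitialSeg.trans hA.initialSeg)⟩

end Downsets

theorem card_le_max_of_orderIso {E : Type*} [PartialOrder E] {P R : FinPartOrd.{0}}
    {D : Finset ↥(disjSum P R)} (e : E ≃o ↥(subposet (disjSum P R) D)) {μ : E}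
    (hμ : ∀ x, ∃ y, μ ≤ y ∧ Relation.SymmGen (· ≤ ·) x y) :
    D.card ≤ max (size P) (size R) := by
  have hf : Monotone fun x => (e x).1 := fun _ _ h => e.monotone h
  refine D.card_le_of_forall_isLeft_eq (α := ↥P) (β := ↥R) (e μ).1.isLeft fun y hy => ?_
  obtain ⟨x, hx⟩ := e.surjective ⟨y, hy⟩
  simpa [hx] using Sum.isLeft_eq_of_monotone hf hμ x

theorem size_disjSum (P R : FinPartOrd.{0}) : size (disjSum P R) = size P + size R :=
  Fintype.card_sum

theorem size_withChain (P₀ : FinPartOrd.{0}) (i : ℕ) : size (withChain P₀ i) = i + size P₀ := by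
  rw [size, withChain, Fintype.card_congr (ofLex : Fin i ⊕ₗ ↥P₀ ≃ Fin i ⊕ ↥P₀)]
  simp [size]

theorem withChain_exists_forall_le (P₀ : FinPartOrd.{0}) {i : ℕ} (hi : 1 ≤ i) :
    ∃ β : ↥(withChain P₀ i), ∀ x, β ≤ x := by
  refine ⟨toLex (Sum.inl ⟨0, hi⟩), fun x => ?_⟩
  rcases x with a | p
  · exact Sum.Lex.inl_le_inl_iff.2 (Fin.mk_le_mk.2 (Nat.zero_le _))
  · exact Sum.Lex.inl_le_inr _ _

/-- For non-isomorphic `P₀`, `R₀` of size `m` and `i ≥ 1`, no witness to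
`D_{m+i+1}(P_iR_i)` has size less than `|P_iR_i| = 2m + 2i`. -/
theorem ladder_no_smaller_witness (m : ℕ) (P₀ R₀ : FinPartOrd.{0}) (hP : size P₀ = m)
    (hR : size R₀ = m) (hniso : ¬Nonempty (↥P₀ ≃o ↥R₀)) (i : ℕ) (hi : 1 ≤ i) :
    size (PRposet P₀ R₀ i) = 2 * m + 2 * i ∧
      ∀ Q : FinPartOrd.{0}, IsWitness (m + i + 1) (DSet (m + i + 1) (PRposet P₀ R₀ i)) Q →
        2 * m + 2 * i ≤ size Q := by
  have hPi : size (withChain P₀ i) = i + m := hP ▸ size_withChain P₀ i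
  have hRi : size (withChain R₀ i) = i + m := hR ▸ size_withChain R₀ i
  refine ⟨by rw [PRposet, size_disjSum, hPi, hRi]; ring, fun Q hQ => ?_⟩
  obtain ⟨βP, hβP⟩ := withChain_exists_forall_le P₀ hi
  obtain ⟨βR, hβR⟩ := withChain_exists_forall_le R₀ hi
  -- `P_i` plus the bottom of `R_i` is a downset of size `m + i + 1`, and dually
  obtain ⟨f⟩ := nonempty_initialSeg_of_DSet_eq (Q' := PRposet P₀ R₀ i) hQ (InitialSeg.inl _ _)
    (Sum.isMin_inr fun y _ => hβR y) (fun ⟨_, h⟩ => Sum.inl_ne_inr h) (by rw [← size, hPi]; ring)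
  obtain ⟨g⟩ := nonempty_initialSeg_of_DSet_eq (Q' := PRposet P₀ R₀ i) hQ (InitialSeg.inr _ _)
    (Sum.isMin_inl fun y _ => hβP y) (fun ⟨_, h⟩ => Sum.inr_ne_inl h) (by rw [← size, hRi]; ring)
  rcases f.nonempty_orderIso_or_card_add_le_or_exists_isDownset g (hPi.trans hRi.symm) hβP hβR
    with hiso | hQcard | ⟨E, hE, hEcard, c, hc⟩
  · exact absurd (hiso.elim Sum.Lex.nonempty_orderIso_of_orderIso) hniso
  · change size _ + size _ ≤ _ at hQcard
    omega
  · obtain ⟨D, -, hDcard, ⟨e⟩⟩ := exists_orderIso_of_DSet_eq hQ hE (by rw [hEcard, ← size]; omega)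
    have hD : D.card ≤ i + m := (card_le_max_of_orderIso e hc).trans (by rw [hPi, hRi, max_self])
    omega
end
end
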